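/- arXiv:2104.05206 — 4 statements merged into one kernel-verified Lean document; each statement's English description precedes it below -/
import Mathlib

section
/- Let r > 0 and let σ : [t1,t2] → ℝ² be a C¹, arc-length parametrized, piecewise C² curve with ‖σ''‖ ≤ 1/r wherever defined, whose image lies in the band B = {(x,y) : -r < x < r, y ≥ 0}, and with σ(t1), σ(t2) on the x-axis. If C is the circle of radius r centered at a point on the nonpositive y-axis passing through σ(t1) and σ(t2), then no point of σ([t1,t2]) lies strictly above C (i.e., outside the closed disk bounded by C in the upper half-plane). -/
open Set Filter Topology

namespace BandLemmaAux

lemma dist_sq_coords (x y : EuclideanSpace ℝ (Fin 2)) :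
    dist x y ^ 2 = (x 0 - y 0) ^ 2 + (x 1 - y 1) ^ 2 := by
  rw [EuclideanSpace.dist_eq, Real.sq_sqrt (by positivity)]
  simp [Fin.sum_univ_two, Real.dist_eq, sq_abs]

lemma norm_sq_coords (x : EuclideanSpace ℝ (Fin 2)) :
    ‖x‖ ^ 2 = x 0 ^ 2 + x 1 ^ 2 := by
  rw [EuclideanSpace.norm_eq, Real.sq_sqrt (by positivity)]
  simp [Fin.sum_univ_two, sq_abs]

lemma orth_decomp {u0 u1 n0 n1 z0 z1 : ℝ} (hu : u0 ^ 2 + u1 ^ 2 = 1)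
    (hn : n0 ^ 2 + n1 ^ 2 = 1) (hun : u0 * n0 + u1 * n1 = 0) :
    (z0 * u0 + z1 * u1) ^ 2 + (z0 * n0 + z1 * n1) ^ 2 = z0 ^ 2 + z1 ^ 2 := by
  have hd : (u0 * n1 - u1 * n0) ^ 2 = 1 := by
    linear_combination (n0 ^ 2 + n1 ^ 2) * hu + hn - (u0 * n0 + u1 * n1) * hun
  have h1 : n0 = -(u0 * n1 - u1 * n0) * u1 := by linear_combination u0 * hun - n0 * hu
  have h2 : n1 = (u0 * n1 - u1 * n0) * u0 := by linear_combination u1 * hun - n1 * hu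
  set d := u0 * n1 - u1 * n0 with hddef
  rw [h1, h2]
  linear_combination (z1 * u0 - z0 * u1) ^ 2 * hd + (z0 ^ 2 + z1 ^ 2) * hu

lemma step_ineq {x0 x1 y0 y1 z0 z1 : ℝ} (hx : x0 ^ 2 + x1 ^ 2 = 1)
    (hy : y0 ^ 2 + y1 ^ 2 = 1) (hz : z0 ^ 2 + z1 ^ 2 = 1) :
    (x0 * y0 + x1 * y1) * (y0 * z0 + y1 * z1)
      - Real.sqrt (1 - (x0 * y0 + x1 * y1) ^ 2) * Real.sqrt (1 - (y0 * z0 + y1 * z1) ^ 2)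
      ≤ x0 * z0 + x1 * z1 := by
  have hid : x0 * z0 + x1 * z1 = (x0 * y0 + x1 * y1) * (y0 * z0 + y1 * z1)
      + (x0 * y1 - x1 * y0) * (z0 * y1 - z1 * y0) := by
    linear_combination (-(x0 * z0 + x1 * z1)) * hy
  have h1 : 1 - (x0 * y0 + x1 * y1) ^ 2 = (x0 * y1 - x1 * y0) ^ 2 := by
    linear_combination (-(y0 ^ 2 + y1 ^ 2)) * hx - hy
  have h2 : 1 - (y0 * z0 + y1 * z1) ^ 2 = (z0 * y1 - z1 * y0) ^ 2 := by
    linear_combination (-(y0 ^ 2 + y1 ^ 2)) * hz - hy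
  rw [h1, h2, Real.sqrt_sq_eq_abs, Real.sqrt_sq_eq_abs, ← abs_mul]
  nlinarith [neg_abs_le ((x0 * y1 - x1 * y0) * (z0 * y1 - z1 * y0))]

lemma cos_step {e : ℝ} (h0 : 0 ≤ e) (h1 : e ≤ 1 / 2) :
    Real.cos (e + e ^ 3) ≤ 1 - e ^ 2 / 2 := by
  have hy0 : 0 ≤ e + e ^ 3 := by positivity
  have he2 : e ^ 2 ≤ 1 / 4 := by nlinarith
  have he4 : e ^ 4 ≤ e ^ 2 / 4 := by nlinarith [mul_le_mul_of_nonneg_left he2 (sq_nonneg e)]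
  have he6 : e ^ 6 ≤ e ^ 2 / 16 := by nlinarith [mul_le_mul_of_nonneg_left he4 (sq_nonneg e)]
  have hy : |e + e ^ 3| ≤ 1 := by rw [abs_of_nonneg hy0]; nlinarith
  have hb := abs_le.1 (Real.cos_bound hy)
  rw [abs_of_nonneg hy0] at hb
  have hk1 : (e + e ^ 3) ^ 2 ≤ 2 * e ^ 2 := by nlinarith
  have hk : (e + e ^ 3) ^ 4 ≤ 4 * e ^ 4 := by nlinarith [sq_nonneg (e + e ^ 3), sq_nonneg e]
  nlinarith [hb.2, sq_nonneg e, pow_nonneg h0 4]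


lemma mono_comparison {a b : ℝ} {f g f' g' : ℝ → ℝ}
    (hf : ∀ t ∈ Icc a b, HasDerivAt f (f' t) t)
    (hg : ∀ t ∈ Icc a b, HasDerivAt g (g' t) t)
    (hle : ∀ t ∈ Icc a b, f' t ≤ g' t) :
    MonotoneOn (fun t => g t - f t) (Icc a b) := by
  apply monotoneOn_of_deriv_nonneg (convex_Icc a b)
  · exact fun t ht => ((hg t ht).sub (hf t ht)).continuousAt.continuousWithinAt
  · intro t ht
    rw [interior_Icc] at ht
    exact ((hg t (Ioo_subset_Icc_self ht)).sub
      (hf t (Ioo_subset_Icc_self ht))).differentiableAt.differentiableWithinAt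
  · intro t ht
    rw [interior_Icc] at ht
    rw [(show HasDerivAt (fun t => g t - f t) (g' t - f' t) t from
      (hg t (Ioo_subset_Icc_self ht)).sub (hf t (Ioo_subset_Icc_self ht))).deriv]
    have := hle t (Ioo_subset_Icc_self ht); linarith

set_option maxHeartbeats 1000000 in
lemma chord_cos {r t1 t2 : ℝ} (hr : 0 < r) {v : ℝ → EuclideanSpace ℝ (Fin 2)}
    (hunit : ∀ t ∈ Icc t1 t2, ‖v t‖ = 1)
    (hlip : ∀ s ∈ Icc t1 t2, ∀ t ∈ Icc t1 t2, ‖v s - v t‖ ≤ (1 / r) * |s - t|)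
    {s t : ℝ} (hs : s ∈ Icc t1 t2) (htm : t ∈ Icc t1 t2) (hst : s ≤ t) (hd : t - s ≤ r) :
    Real.cos ((t - s) / r) ≤ v s 0 * v t 0 + v s 1 * v t 1 := by
  have uc : ∀ τ ∈ Icc t1 t2, v τ 0 ^ 2 + v τ 1 ^ 2 = 1 := by
    intro τ hτ
    have h1 := norm_sq_coords (v τ)
    rw [hunit τ hτ] at h1; linarith
  obtain ⟨Δ, hΔdef⟩ : ∃ d : ℝ, d = t - s := ⟨_, rfl⟩
  rw [← hΔdef]
  rw [← hΔdef] at hd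
  have hΔ0 : 0 ≤ Δ := by rw [hΔdef]; linarith
  have hδ1 : Δ / r ≤ 1 := by rw [div_le_one hr]; linarith
  have hδ0 : 0 ≤ Δ / r := by positivity
  have hππ : (3 : ℝ) < Real.pi := Real.pi_gt_three
  -- main estimate for each n ≥ 2
  have main : ∀ n : ℕ, 2 ≤ n →
      Real.cos (Δ / r + (Δ / r) ^ 3 / (n : ℝ) ^ 2) ≤ v s 0 * v t 0 + v s 1 * v t 1 := by
    intro n hn
    have hN0 : (0 : ℝ) < (n : ℝ) := by positivity
    have hN2 : (2 : ℝ) ≤ (n : ℝ) := by exact_mod_cast hn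
    obtain ⟨e, hedef⟩ : ∃ e : ℝ, e = Δ / ((n : ℝ) * r) := ⟨_, rfl⟩
    have he0 : 0 ≤ e := by rw [hedef]; positivity
    have heN : e = (Δ / r) / (n : ℝ) := by rw [hedef]; ring
    have he : e ≤ 1 / 2 := by
      rw [heN]
      calc Δ / r / (n : ℝ) ≤ 1 / (n : ℝ) := by gcongr
        _ ≤ 1 / 2 := by
          rw [div_le_div_iff₀ hN0 (by norm_num)]; linarith
    obtain ⟨b, hbdef⟩ : ∃ b : ℝ, b = e + e ^ 3 := ⟨_, rfl⟩
    have hb0 : 0 ≤ b := by rw [hbdef]; positivity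
    have hNb : (n : ℝ) * b = Δ / r + (Δ / r) ^ 3 / (n : ℝ) ^ 2 := by
      rw [hbdef, heN]; field_simp
    have hNb54 : (n : ℝ) * b ≤ 5 / 4 := by
      rw [hNb]
      have h3 : (Δ / r) ^ 3 ≤ 1 := by
        calc (Δ / r) ^ 3 ≤ 1 ^ 3 := by gcongr
          _ = 1 := by norm_num
      have : (Δ / r) ^ 3 / (n : ℝ) ^ 2 ≤ 1 / 4 := by
        rw [div_le_div_iff₀ (by positivity) (by norm_num)]; nlinarith
      linarith
    -- membership of partition points
    have hmem : ∀ k : ℕ, k ≤ n → s + (k : ℝ) * (Δ / (n : ℝ)) ∈ Icc t1 t2 := by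
      intro k hk
      have hk' : (k : ℝ) ≤ (n : ℝ) := by exact_mod_cast hk
      have h1 : 0 ≤ (k : ℝ) * (Δ / (n : ℝ)) := by positivity
      have h2 : (k : ℝ) * (Δ / (n : ℝ)) ≤ Δ := by
        calc (k : ℝ) * (Δ / (n : ℝ)) ≤ (n : ℝ) * (Δ / (n : ℝ)) := by gcongr
          _ = Δ := by rw [mul_comm, div_mul_cancel₀ _ (ne_of_gt hN0)]
      constructor
      · linarith [hs.1]
      · have : s + Δ = t := by rw [hΔdef]; ring
        linarith [htm.2]
    -- the induction
    have ind : ∀ k : ℕ, k ≤ n →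
        Real.cos ((k : ℝ) * b) ≤
          v s 0 * v (s + (k : ℝ) * (Δ / (n : ℝ))) 0
            + v s 1 * v (s + (k : ℝ) * (Δ / (n : ℝ))) 1 := by
      intro k
      induction k with
      | zero =>
        intro _
        simp only [Nat.cast_zero, zero_mul, add_zero, Real.cos_zero]
        have := uc s hs; nlinarith
      | succ k ih =>
        intro hk1
        have hk : k ≤ n := Nat.le_of_succ_le hk1
        have hkN : (k : ℝ) ≤ (n : ℝ) := by exact_mod_cast hk
        have hp := ih hk
        obtain ⟨tk, htkdef⟩ : ∃ q : ℝ, q = s + (k : ℝ) * (Δ / (n : ℝ)) := ⟨_, rfl⟩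
        obtain ⟨tk1, htk1def⟩ : ∃ q : ℝ, q = s + ((k : ℝ) + 1) * (Δ / (n : ℝ)) := ⟨_, rfl⟩
        rw [← htkdef] at hp
        have htk1cast : s + ((k + 1 : ℕ) : ℝ) * (Δ / (n : ℝ)) = tk1 := by
          rw [htk1def]; push_cast; ring
        rw [htk1cast]
        have hmk : tk ∈ Icc t1 t2 := by rw [htkdef]; exact hmem k hk
        have hmk1 : tk1 ∈ Icc t1 t2 := by
          rw [← htk1cast]; exact hmem (k + 1) hk1
        -- angle bounds
        have hkb0 : 0 ≤ (k : ℝ) * b := by positivity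
        have hkb54 : (k : ℝ) * b ≤ 5 / 4 := by
          calc (k : ℝ) * b ≤ (n : ℝ) * b := by gcongr
            _ ≤ 5 / 4 := hNb54
        have hb54 : b ≤ 5 / 4 := by nlinarith
        have hcoskb : 0 ≤ Real.cos ((k : ℝ) * b) :=
          Real.cos_nonneg_of_mem_Icc ⟨by linarith, by linarith⟩
        have hcosb : 0 ≤ Real.cos b :=
          Real.cos_nonneg_of_mem_Icc ⟨by linarith, by linarith⟩
        have hsinkb : 0 ≤ Real.sin ((k : ℝ) * b) :=
          Real.sin_nonneg_of_nonneg_of_le_pi hkb0 (by linarith)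
        have hsinb : 0 ≤ Real.sin b :=
          Real.sin_nonneg_of_nonneg_of_le_pi hb0 (by linarith)
        -- chord estimate between tk and tk1
        have hchord : ‖v tk - v tk1‖ ≤ e := by
          have hl := hlip tk hmk tk1 hmk1
          have habs : |tk - tk1| = Δ / (n : ℝ) := by
            rw [htkdef, htk1def, abs_sub_comm]
            have h2 : s + ((k : ℝ) + 1) * (Δ / (n : ℝ)) - (s + (k : ℝ) * (Δ / (n : ℝ)))
                = Δ / (n : ℝ) := by ring
            rw [h2, abs_of_nonneg (by positivity)]
          rw [habs] at hl
          calc ‖v tk - v tk1‖ ≤ 1 / r * (Δ / (n : ℝ)) := hl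
            _ = e := by rw [hedef]; ring
        have hq : 1 - e ^ 2 / 2 ≤ v tk 0 * v tk1 0 + v tk 1 * v tk1 1 := by
          have hsq : ‖v tk - v tk1‖ ^ 2 ≤ e ^ 2 :=
            pow_le_pow_left₀ (norm_nonneg _) hchord 2
          have hco : ‖v tk - v tk1‖ ^ 2
              = (v tk 0 - v tk1 0) ^ 2 + (v tk 1 - v tk1 1) ^ 2 := by
            rw [norm_sq_coords (v tk - v tk1)]
            simp [PiLp.sub_apply]
          rw [hco] at hsq
          nlinarith [uc tk hmk, uc tk1 hmk1]
        have hqcos : Real.cos b ≤ v tk 0 * v tk1 0 + v tk 1 * v tk1 1 := by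
          rw [hbdef]
          exact le_trans (cos_step he0 he) hq
        -- square root bounds
        have hp0 : 0 ≤ v s 0 * v tk 0 + v s 1 * v tk 1 := le_trans hcoskb hp
        have hq0 : 0 ≤ v tk 0 * v tk1 0 + v tk 1 * v tk1 1 := le_trans hcosb hqcos
        have hsqrtp : Real.sqrt (1 - (v s 0 * v tk 0 + v s 1 * v tk 1) ^ 2)
            ≤ Real.sin ((k : ℝ) * b) := by
          have h1 : 1 - (v s 0 * v tk 0 + v s 1 * v tk 1) ^ 2
              ≤ Real.sin ((k : ℝ) * b) ^ 2 := by
            have := Real.sin_sq ((k : ℝ) * b)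
            nlinarith [pow_le_pow_left₀ hcoskb hp 2]
          calc Real.sqrt (1 - (v s 0 * v tk 0 + v s 1 * v tk 1) ^ 2)
              ≤ Real.sqrt (Real.sin ((k : ℝ) * b) ^ 2) := Real.sqrt_le_sqrt h1
            _ = Real.sin ((k : ℝ) * b) := by
                rw [Real.sqrt_sq_eq_abs, abs_of_nonneg hsinkb]
        have hsqrtq : Real.sqrt (1 - (v tk 0 * v tk1 0 + v tk 1 * v tk1 1) ^ 2)
            ≤ Real.sin b := by
          have h1 : 1 - (v tk 0 * v tk1 0 + v tk 1 * v tk1 1) ^ 2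
              ≤ Real.sin b ^ 2 := by
            have := Real.sin_sq b
            nlinarith [pow_le_pow_left₀ hcosb hqcos 2]
          calc Real.sqrt (1 - (v tk 0 * v tk1 0 + v tk 1 * v tk1 1) ^ 2)
              ≤ Real.sqrt (Real.sin b ^ 2) := Real.sqrt_le_sqrt h1
            _ = Real.sin b := by rw [Real.sqrt_sq_eq_abs, abs_of_nonneg hsinb]
        have hstep := step_ineq (uc s hs) (uc tk hmk) (uc tk1 hmk1)
        have hmul1 : Real.cos ((k : ℝ) * b) * Real.cos b
            ≤ (v s 0 * v tk 0 + v s 1 * v tk 1) * (v tk 0 * v tk1 0 + v tk 1 * v tk1 1) :=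
          mul_le_mul hp hqcos hcosb hp0
        have hmul2 : Real.sqrt (1 - (v s 0 * v tk 0 + v s 1 * v tk 1) ^ 2)
              * Real.sqrt (1 - (v tk 0 * v tk1 0 + v tk 1 * v tk1 1) ^ 2)
            ≤ Real.sin ((k : ℝ) * b) * Real.sin b :=
          mul_le_mul hsqrtp hsqrtq (Real.sqrt_nonneg _) hsinkb
        have hcast : ((k + 1 : ℕ) : ℝ) * b = (k : ℝ) * b + b := by push_cast; ring
        rw [hcast, Real.cos_add]
        linarith
    -- apply at k = n
    have hfin := ind n le_rfl
    have hpt : s + ((n : ℝ)) * (Δ / (n : ℝ)) = t := by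
      have hNe : (n : ℝ) ≠ 0 := ne_of_gt hN0
      rw [mul_comm, div_mul_cancel₀ _ hNe, hΔdef]; ring
    rw [hpt] at hfin
    rwa [hNb] at hfin
  -- pass to the limit
  have hlim : Tendsto (fun n : ℕ => Real.cos (Δ / r + (Δ / r) ^ 3 / (n : ℝ) ^ 2)) atTop
      (𝓝 (Real.cos (Δ / r))) := by
    have h1 : Tendsto (fun n : ℕ => (Δ / r) ^ 3 / (n : ℝ) ^ 2) atTop (𝓝 0) := by
      apply Tendsto.div_atTop tendsto_const_nhds
      exact (tendsto_pow_atTop (by norm_num : 2 ≠ 0)).comp tendsto_natCast_atTop_atTop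
    have h2 : Tendsto (fun n : ℕ => Δ / r + (Δ / r) ^ 3 / (n : ℝ) ^ 2) atTop
        (𝓝 (Δ / r)) := by
      simpa using tendsto_const_nhds.add h1
    exact (Real.continuous_cos.tendsto _).comp h2
  exact le_of_tendsto hlim (eventually_atTop.2 ⟨2, main⟩)


lemma coord_deriv {σ v : ℝ → EuclideanSpace ℝ (Fin 2)} {t : ℝ}
    (h : HasDerivAt σ (v t) t) (i : Fin 2) :
    HasDerivAt (fun s => σ s i) (v t i) t := by
  have := (EuclideanSpace.proj (𝕜 := ℝ) i).hasFDerivAt.comp_hasDerivAt t h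
  exact this

set_option maxHeartbeats 1000000 in
lemma avoidance {r t1 t2 : ℝ} (hr : 0 < r) {σ v : ℝ → EuclideanSpace ℝ (Fin 2)}
    (hderiv : ∀ t ∈ Icc t1 t2, HasDerivAt σ (v t) t)
    (hunit : ∀ t ∈ Icc t1 t2, ‖v t‖ = 1)
    (hlip : ∀ s ∈ Icc t1 t2, ∀ t ∈ Icc t1 t2, ‖v s - v t‖ ≤ (1 / r) * |s - t|)
    {a bb T : ℝ} (hT : T ∈ Icc t1 t2)
    (hdist : (σ T 0 - a) ^ 2 + (σ T 1 - bb) ^ 2 = r ^ 2)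
    (htan : v T 0 * (σ T 0 - a) + v T 1 * (σ T 1 - bb) = 0) :
    ∀ τ ∈ Icc T (min t2 (T + r)), r ^ 2 ≤ (σ τ 0 - a) ^ 2 + (σ τ 1 - bb) ^ 2 := by
  have hsub : Icc T (min t2 (T + r)) ⊆ Icc t1 t2 := fun x hx =>
    ⟨le_trans hT.1 hx.1, le_trans hx.2 (min_le_left _ _)⟩
  have hrne : r ≠ 0 := ne_of_gt hr
  have hππ : (3 : ℝ) < Real.pi := Real.pi_gt_three
  have uc : ∀ s ∈ Icc t1 t2, v s 0 ^ 2 + v s 1 ^ 2 = 1 := by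
    intro s hsm
    have h1 := norm_sq_coords (v s)
    rw [hunit s hsm] at h1; linarith
  have hu := uc T hT
  have hn : ((σ T 0 - a) / r) ^ 2 + ((σ T 1 - bb) / r) ^ 2 = 1 := by
    field_simp
    linarith [hdist]
  have hun : v T 0 * ((σ T 0 - a) / r) + v T 1 * ((σ T 1 - bb) / r) = 0 := by
    field_simp
    linarith [htan]
  -- tangential and normal components
  set u0 := v T 0 with hu0
  set u1 := v T 1 with hu1
  set n0 := (σ T 0 - a) / r with hn0
  set n1 := (σ T 1 - bb) / r with hn1
  set A : ℝ → ℝ := fun x => (σ x 0 - a) * u0 + (σ x 1 - bb) * u1 with hAdef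
  set B : ℝ → ℝ := fun x => (σ x 0 - a) * n0 + (σ x 1 - bb) * n1 with hBdef
  have hA : ∀ x ∈ Icc T (min t2 (T + r)),
      HasDerivAt A (v x 0 * u0 + v x 1 * u1) x := by
    intro x hx
    exact (((coord_deriv (hderiv x (hsub hx)) 0).sub_const a).mul_const u0).add
      (((coord_deriv (hderiv x (hsub hx)) 1).sub_const bb).mul_const u1)
  have hB : ∀ x ∈ Icc T (min t2 (T + r)),
      HasDerivAt B (v x 0 * n0 + v x 1 * n1) x := by
    intro x hx
    exact (((coord_deriv (hderiv x (hsub hx)) 0).sub_const a).mul_const n0).add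
      (((coord_deriv (hderiv x (hsub hx)) 1).sub_const bb).mul_const n1)
  have hfsin : ∀ x : ℝ, HasDerivAt (fun y => r * Real.sin ((y - T) / r))
      (Real.cos ((x - T) / r)) x := by
    intro x
    have h1 : HasDerivAt (fun y : ℝ => (y - T) / r) (1 / r) x := by
      simpa using ((hasDerivAt_id x).sub_const T).div_const r
    have h2 := (Real.hasDerivAt_sin ((x - T) / r)).comp x h1
    have h3 := h2.const_mul r
    refine h3.congr_deriv ?_
    field_simp
  have hfcos : ∀ x : ℝ, HasDerivAt (fun y => r * Real.cos ((y - T) / r))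
      (-Real.sin ((x - T) / r)) x := by
    intro x
    have h1 : HasDerivAt (fun y : ℝ => (y - T) / r) (1 / r) x := by
      simpa using ((hasDerivAt_id x).sub_const T).div_const r
    have h2 := (Real.hasDerivAt_cos ((x - T) / r)).comp x h1
    have h3 := h2.const_mul r
    refine h3.congr_deriv ?_
    field_simp
  -- bounds for the angle variable
  have hδ : ∀ x ∈ Icc T (min t2 (T + r)),
      0 ≤ (x - T) / r ∧ (x - T) / r ≤ 1 := by
    intro x hx
    constructor
    · apply div_nonneg _ (le_of_lt hr); linarith [hx.1]
    · rw [div_le_one hr]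
      have := le_trans hx.2 (min_le_right t2 (T + r)); linarith
  have hvu : ∀ x ∈ Icc T (min t2 (T + r)),
      Real.cos ((x - T) / r) ≤ v x 0 * u0 + v x 1 * u1 := by
    intro x hx
    have := chord_cos hr hunit hlip hT (hsub hx) hx.1
      (by have := le_trans hx.2 (min_le_right t2 (T + r)); linarith)
    rw [hu0, hu1]; linarith [this]
  have hcosδ : ∀ x ∈ Icc T (min t2 (T + r)), 0 ≤ Real.cos ((x - T) / r) := by
    intro x hx
    exact Real.cos_nonneg_of_mem_Icc ⟨by linarith [(hδ x hx).1, hππ], by linarith [(hδ x hx).2, hππ]⟩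
  have hsinδ : ∀ x ∈ Icc T (min t2 (T + r)), 0 ≤ Real.sin ((x - T) / r) := by
    intro x hx
    exact Real.sin_nonneg_of_nonneg_of_le_pi (hδ x hx).1 (by linarith [(hδ x hx).2, hππ])
  have hvn : ∀ x ∈ Icc T (min t2 (T + r)),
      -Real.sin ((x - T) / r) ≤ v x 0 * n0 + v x 1 * n1 := by
    intro x hx
    have hdec := orth_decomp (z0 := v x 0) (z1 := v x 1) hu hn hun
    have hucx := uc x (hsub hx)
    have h1 : (v x 0 * u0 + v x 1 * u1) ^ 2 + (v x 0 * n0 + v x 1 * n1) ^ 2 = 1 := by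
      rw [hu0, hu1, hn0, hn1] at hdec ⊢
      linarith [hdec]
    have h2 := hvu x hx
    have h3 := hcosδ x hx
    have h4 : Real.cos ((x - T) / r) ^ 2 ≤ (v x 0 * u0 + v x 1 * u1) ^ 2 :=
      pow_le_pow_left₀ h3 h2 2
    have h5 := Real.sin_sq ((x - T) / r)
    have h6 := hsinδ x hx
    nlinarith [sq_nonneg (v x 0 * n0 + v x 1 * n1 + Real.sin ((x - T) / r))]
  -- T belongs to the interval
  have hTmem : T ∈ Icc T (min t2 (T + r)) :=
    ⟨le_refl T, le_min hT.2 (by linarith)⟩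
  -- lower bound for A
  have hmonoA := mono_comparison (f := fun y => r * Real.sin ((y - T) / r)) (g := A)
    (fun x _ => hfsin x) hA hvu
  have hAT : A T = 0 := by
    rw [hAdef]; simp only; rw [hu0, hu1]; linarith [htan]
  have hAτ : ∀ x ∈ Icc T (min t2 (T + r)), r * Real.sin ((x - T) / r) ≤ A x := by
    intro x hx
    have := hmonoA hTmem hx hx.1
    simp only at this
    rw [hAT] at this
    have hz : r * Real.sin ((T - T) / r) = 0 := by simp
    rw [hz] at this
    linarith
  -- lower bound for B
  have hmonoB := mono_comparison (f := fun y => r * Real.cos ((y - T) / r)) (g := B)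
    (fun x _ => hfcos x) hB hvn
  have hBT : B T = r := by
    rw [hBdef]; simp only; rw [hn0, hn1]
    field_simp
    linarith [hdist]
  have hBτ : ∀ x ∈ Icc T (min t2 (T + r)), r * Real.cos ((x - T) / r) ≤ B x := by
    intro x hx
    have := hmonoB hTmem hx hx.1
    simp only at this
    rw [hBT] at this
    have hz : r * Real.cos ((T - T) / r) = r := by simp
    rw [hz] at this
    linarith
  -- conclusion
  intro τ hτ
  have hdecτ := orth_decomp (z0 := σ τ 0 - a) (z1 := σ τ 1 - bb) hu hn hun
  have h1 : A τ ^ 2 + B τ ^ 2 = (σ τ 0 - a) ^ 2 + (σ τ 1 - bb) ^ 2 := by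
    rw [hAdef, hBdef]; simp only; rw [hu0, hu1, hn0, hn1] at hdecτ ⊢
    linarith [hdecτ]
  have h2 := hAτ τ hτ
  have h3 := hBτ τ hτ
  have h4 : (r * Real.sin ((τ - T) / r)) ^ 2 ≤ A τ ^ 2 :=
    pow_le_pow_left₀ (mul_nonneg (le_of_lt hr) (hsinδ τ hτ)) h2 2
  have h5 : (r * Real.cos ((τ - T) / r)) ^ 2 ≤ B τ ^ 2 :=
    pow_le_pow_left₀ (mul_nonneg (le_of_lt hr) (hcosδ τ hτ)) h3 2
  have h6 := Real.sin_sq_add_cos_sq ((τ - T) / r)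
  nlinarith [h1, h4, h5, h6]

end BandLemmaAux

open BandLemmaAux in
set_option maxHeartbeats 1000000 in

/-- **Lemma 3.1 (band lemma).** A `κ`-constrained curve (unit speed, `C¹`, piecewise `C²`
with `‖σ''‖ ≤ 1/r`, encoded by a `(1/r)`-Lipschitz unit tangent field `v`) contained in the
band `{ (x,y) | -r < x < r, 0 ≤ y }` with endpoints on the `x`-axis cannot have a point
strictly above the radius-`r` circle centered on the nonpositive `y`-axis through its
endpoints: every point of the curve lies in the corresponding closed disk. -/
theorem band_lemma (r : ℝ) (hr : 0 < r) (t1 t2 : ℝ) (ht : t1 ≤ t2)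
    (σ v : ℝ → EuclideanSpace ℝ (Fin 2))
    (hderiv : ∀ t ∈ Set.Icc t1 t2, HasDerivAt σ (v t) t)
    (hunit : ∀ t ∈ Set.Icc t1 t2, ‖v t‖ = 1)
    (hcont : ContinuousOn v (Set.Icc t1 t2))
    (hlip : ∀ s ∈ Set.Icc t1 t2, ∀ t ∈ Set.Icc t1 t2, ‖v s - v t‖ ≤ (1 / r) * |s - t|)
    (hband : ∀ t ∈ Set.Icc t1 t2, σ t 0 ∈ Set.Ioo (-r) r ∧ 0 ≤ σ t 1)
    (hx1 : σ t1 1 = 0) (hx2 : σ t2 1 = 0)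
    (c : EuclideanSpace ℝ (Fin 2)) (hc0 : c 0 = 0) (hc1 : c 1 ≤ 0)
    (hcp : dist (σ t1) c = r) (hcq : dist (σ t2) c = r) :
    ∀ t ∈ Set.Icc t1 t2, dist (σ t) c ≤ r := by
  by_contra hcon
  push_neg at hcon
  obtain ⟨t0, ht0, hgt⟩ := hcon
  have hσc : ContinuousOn σ (Icc t1 t2) := fun τ hτ =>
    (hderiv τ hτ).continuousAt.continuousWithinAt
  have hxcont : ContinuousOn (fun t => σ t 0) (Icc t1 t2) :=
    (EuclideanSpace.proj (0 : Fin 2)).continuous.comp_continuousOn hσc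
  have hycont : ContinuousOn (fun t => σ t 1) (Icc t1 t2) :=
    (EuclideanSpace.proj (1 : Fin 2)).continuous.comp_continuousOn hσc
  have hx2lt : ∀ t ∈ Icc t1 t2, (σ t 0) ^ 2 < r ^ 2 := by
    intro t htm
    have h1 := (hband t htm).1
    exact sq_lt_sq' h1.1 h1.2
  -- the height-above-circle function
  obtain ⟨h, hdef⟩ : ∃ h : ℝ → ℝ,
      h = fun t => σ t 1 - c 1 - Real.sqrt (r ^ 2 - (σ t 0) ^ 2) := ⟨_, rfl⟩
  have hval : ∀ t, h t = σ t 1 - c 1 - Real.sqrt (r ^ 2 - (σ t 0) ^ 2) := by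
    intro t; rw [hdef]
  have hcont_h : ContinuousOn h (Icc t1 t2) := by
    rw [hdef]
    apply ContinuousOn.sub (hycont.sub continuousOn_const)
    exact Real.continuous_sqrt.comp_continuousOn
      (continuousOn_const.sub (hxcont.pow 2))
  obtain ⟨tst, htst, hmax⟩ := isCompact_Icc.exists_isMaxOn (nonempty_Icc.2 ht) hcont_h
  have hmaxx : ∀ x ∈ Icc t1 t2, h x ≤ h tst := fun x hx => hmax hx
  -- endpoint values
  have e1 := dist_sq_coords (σ t1) c
  rw [hcp, hc0, hx1] at e1
  have e2 := dist_sq_coords (σ t2) c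
  rw [hcq, hc0, hx2] at e2
  have hs1 : Real.sqrt (r ^ 2 - (σ t1 0) ^ 2) = -c 1 := by
    have hx : r ^ 2 - (σ t1 0) ^ 2 = (c 1) ^ 2 := by linear_combination e1
    rw [hx, Real.sqrt_sq_eq_abs, abs_of_nonpos hc1]
  have hs2 : Real.sqrt (r ^ 2 - (σ t2 0) ^ 2) = -c 1 := by
    have hx : r ^ 2 - (σ t2 0) ^ 2 = (c 1) ^ 2 := by linear_combination e2
    rw [hx, Real.sqrt_sq_eq_abs, abs_of_nonpos hc1]
  have hh1 : h t1 = 0 := by rw [hval t1, hx1, hs1]; ring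
  have hh2 : h t2 = 0 := by rw [hval t2, hx2, hs2]; ring
  -- the maximum is positive
  have hht0 : 0 < h t0 := by
    have hd0 : r ^ 2 < dist (σ t0) c ^ 2 :=
      pow_lt_pow_left₀ hgt (le_of_lt hr) two_ne_zero
    have e0 := dist_sq_coords (σ t0) c
    rw [hc0] at e0
    ring_nf at e0
    have hy0 : 0 ≤ σ t0 1 := (hband t0 ht0).2
    have hyc0 : 0 ≤ σ t0 1 - c 1 := by linarith
    have hsqgt : r ^ 2 - (σ t0 0) ^ 2 < (σ t0 1 - c 1) ^ 2 := by
      have hx9 := hx2lt t0 ht0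
      nlinarith [e0, hd0]
    have hyc : 0 < σ t0 1 - c 1 := by
      rcases eq_or_lt_of_le hyc0 with he | hltc
      · exfalso
        rw [← he] at hsqgt
        have hx9 := hx2lt t0 ht0
        norm_num at hsqgt
        linarith
      · exact hltc
    have hlt : Real.sqrt (r ^ 2 - (σ t0 0) ^ 2) < σ t0 1 - c 1 := by
      rw [Real.sqrt_lt' hyc]
      linarith [hsqgt]
    rw [hval t0]; linarith
  have hstar : 0 < h tst := lt_of_lt_of_le hht0 (hmaxx t0 ht0)
  -- the maximum point is interior
  have htst1 : t1 < tst := by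
    rcases eq_or_lt_of_le htst.1 with heq | hlt
    · rw [← heq, hh1] at hstar; exact absurd hstar (lt_irrefl 0)
    · exact hlt
  have htst2 : tst < t2 := by
    rcases eq_or_lt_of_le htst.2 with heq | hlt
    · rw [heq, hh2] at hstar; exact absurd hstar (lt_irrefl 0)
    · exact hlt
  -- the shifted circle center height
  obtain ⟨bb, hbbdef⟩ : ∃ b : ℝ, b = c 1 + h tst := ⟨_, rfl⟩
  have hψst : σ tst 1 - bb = Real.sqrt (r ^ 2 - (σ tst 0) ^ 2) := by
    have := hval tst; rw [hbbdef]; linarith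
  have hx2st := hx2lt tst htst
  have hψpos : 0 < Real.sqrt (r ^ 2 - (σ tst 0) ^ 2) :=
    Real.sqrt_pos.2 (by linarith)
  have hsqst : Real.sqrt (r ^ 2 - (σ tst 0) ^ 2) ^ 2 = r ^ 2 - (σ tst 0) ^ 2 :=
    Real.sq_sqrt (by linarith)
  -- derivative of h vanishes at tst
  have hdx := coord_deriv (hderiv tst htst) 0
  have hdy := coord_deriv (hderiv tst htst) 1
  have hw : HasDerivAt (fun t => r ^ 2 - (σ t 0) ^ 2)
      (-(2 * σ tst 0 * v tst 0)) tst := by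
    have h1 := (hdx.pow 2).const_sub (r ^ 2)
    refine h1.congr_deriv ?_; norm_num
  have hsq : HasDerivAt (fun t => Real.sqrt (r ^ 2 - (σ t 0) ^ 2))
      (1 / (2 * Real.sqrt (r ^ 2 - (σ tst 0) ^ 2)) * -(2 * σ tst 0 * v tst 0)) tst := by
    have hne : r ^ 2 - (σ tst 0) ^ 2 ≠ 0 := ne_of_gt (by linarith [hx2st])
    exact (Real.hasDerivAt_sqrt hne).comp tst hw
  have hdh : HasDerivAt h (v tst 1
      - 1 / (2 * Real.sqrt (r ^ 2 - (σ tst 0) ^ 2)) * -(2 * σ tst 0 * v tst 0)) tst := by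
    rw [hdef]
    exact ((hdy.sub_const (c 1))).sub hsq
  have hloc : IsLocalMax h tst :=
    Filter.eventually_of_mem (Ioo_mem_nhds htst1 htst2)
      (fun x hx => hmaxx x (Ioo_subset_Icc_self hx))
  have hD0 := hloc.hasDerivAt_eq_zero hdh
  -- tangency at tst
  have htanst : v tst 0 * (σ tst 0 - c 0) + v tst 1 * (σ tst 1 - bb) = 0 := by
    rw [hc0, sub_zero, hψst]
    have e0 : v tst 1 = 1 / (2 * Real.sqrt (r ^ 2 - (σ tst 0) ^ 2))
        * -(2 * σ tst 0 * v tst 0) := by linarith [hD0]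
    rw [e0]
    field_simp
    ring
  have hdistst : (σ tst 0 - c 0) ^ 2 + (σ tst 1 - bb) ^ 2 = r ^ 2 := by
    rw [hc0, sub_zero, hψst, hsqst]; ring
  -- the bootstrap set
  obtain ⟨S, hSdef⟩ : ∃ S : Set ℝ, S = {τ | τ ∈ Icc tst t2 ∧ ∀ s ∈ Icc tst τ,
      (σ s 0 - c 0) ^ 2 + (σ s 1 - bb) ^ 2 = r ^ 2 ∧ 0 ≤ σ s 1 - bb} := ⟨_, rfl⟩
  have htstS : tst ∈ S := by
    rw [hSdef]
    refine ⟨⟨le_refl _, le_of_lt htst2⟩, ?_⟩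
    intro s hs
    have hseq : s = tst := le_antisymm hs.2 hs.1
    rw [hseq]
    exact ⟨hdistst, by rw [hψst]; positivity⟩
  have hSbdd : BddAbove S := ⟨t2, fun τ hτ => by rw [hSdef] at hτ; exact hτ.1.2⟩
  have hSne : S.Nonempty := ⟨tst, htstS⟩
  obtain ⟨T, hTdef⟩ : ∃ T : ℝ, T = sSup S := ⟨_, rfl⟩
  have hTlb : tst ≤ T := hTdef ▸ le_csSup hSbdd htstS
  have hTub : T ≤ t2 := by
    rw [hTdef]
    exact csSup_le hSne (fun τ hτ => by rw [hSdef] at hτ; exact hτ.1.2)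
  have hTmem : T ∈ Icc t1 t2 := ⟨le_trans htst.1 hTlb, hTub⟩
  -- closedness
  have hsub2 : Icc tst t2 ⊆ Icc t1 t2 := fun x hx => ⟨le_trans htst.1 hx.1, hx.2⟩
  have hfC : ContinuousOn (fun τ => (σ τ 0 - c 0) ^ 2 + (σ τ 1 - bb) ^ 2) (Icc tst t2) :=
    (((hxcont.mono hsub2).sub continuousOn_const).pow 2).add
      (((hycont.mono hsub2).sub continuousOn_const).pow 2)
  have hgC : ContinuousOn (fun τ => σ τ 1 - bb) (Icc tst t2) :=
    (hycont.mono hsub2).sub continuousOn_const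
  have hC1 : IsClosed (Icc tst t2 ∩
      (fun τ => (σ τ 0 - c 0) ^ 2 + (σ τ 1 - bb) ^ 2) ⁻¹' {r ^ 2}) :=
    hfC.preimage_isClosed_of_isClosed isClosed_Icc isClosed_singleton
  have hC2 : IsClosed (Icc tst t2 ∩ (fun τ => σ τ 1 - bb) ⁻¹' (Ici 0)) :=
    hgC.preimage_isClosed_of_isClosed isClosed_Icc isClosed_Ici
  have hSsubC : S ⊆ (Icc tst t2 ∩
        (fun τ => (σ τ 0 - c 0) ^ 2 + (σ τ 1 - bb) ^ 2) ⁻¹' {r ^ 2}) ∩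
      (Icc tst t2 ∩ (fun τ => σ τ 1 - bb) ⁻¹' (Ici 0)) := by
    intro τ hτ
    rw [hSdef] at hτ
    have hP := hτ.2 τ ⟨hτ.1.1, le_refl τ⟩
    exact ⟨⟨hτ.1, hP.1⟩, ⟨hτ.1, hP.2⟩⟩
  have hTclosure : T ∈ closure S := by
    rw [hTdef]; exact csSup_mem_closure hSne hSbdd
  have hTC := closure_minimal hSsubC (hC1.inter hC2) hTclosure
  have hTdist : (σ T 0 - c 0) ^ 2 + (σ T 1 - bb) ^ 2 = r ^ 2 := hTC.1.2
  have hTψ : 0 ≤ σ T 1 - bb := hTC.2.2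
  -- all points of [tst, T] satisfy the property
  have hPIcc : ∀ s ∈ Icc tst T,
      (σ s 0 - c 0) ^ 2 + (σ s 1 - bb) ^ 2 = r ^ 2 ∧ 0 ≤ σ s 1 - bb := by
    intro s hs
    rcases eq_or_lt_of_le hs.2 with heq | hlt
    · rw [heq]; exact ⟨hTdist, hTψ⟩
    · rw [hTdef] at hlt
      obtain ⟨τ, hτS, hsτ⟩ := exists_lt_of_lt_csSup hSne hlt
      rw [hSdef] at hτS
      exact hτS.2 s ⟨hs.1, le_of_lt hsτ⟩
  -- ψ is strictly positive at T
  have hψT : 0 < σ T 1 - bb := by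
    have hb := hx2lt T hTmem
    rw [hc0, sub_zero] at hTdist
    rcases eq_or_lt_of_le hTψ with heq | hlt
    · exfalso
      rw [← heq] at hTdist
      norm_num at hTdist
      linarith
    · exact hlt
  rcases eq_or_lt_of_le hTub with hTeq | hTlt
  · -- T = t2 : final contradiction
    have hd2 : (σ t2 0 - c 0) ^ 2 + (σ t2 1 - bb) ^ 2 = r ^ 2 := by
      rw [← hTeq]; exact (hPIcc T ⟨hTlb, le_refl T⟩).1
    have hψ2 : 0 < σ t2 1 - bb := by rw [← hTeq]; exact hψT
    rw [hx2] at hψ2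
    rw [hc0, hx2, sub_zero] at hd2
    -- hd2 : x2² + bb² = r², e2 : r² = x2² + c1²
    have hfact : (bb - c 1) * (bb + c 1) = 0 := by linear_combination hd2 + e2
    rcases mul_eq_zero.1 hfact with h1 | h1
    · rw [hbbdef] at h1; linarith [hstar]
    · -- bb = -c1 ≥ 0 but bb < 0
      have hbc : bb = -c 1 := by linarith
      linarith [hψ2, hc1]
  · -- T < t2 : extend, contradiction with sSup
    -- tangency at T
    have htanT : v T 0 * (σ T 0 - c 0) + v T 1 * (σ T 1 - bb) = 0 := by
      rcases eq_or_lt_of_le hTlb with heq | hlt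
      · rw [← heq]; exact htanst
      · have hq : HasDerivAt (fun τ => (σ τ 0 - c 0) ^ 2 + (σ τ 1 - bb) ^ 2)
            (2 * (σ T 0 - c 0) * v T 0 + 2 * (σ T 1 - bb) * v T 1) T := by
          have h1 := ((coord_deriv (hderiv T hTmem) 0).sub_const (c 0)).pow 2
          have h2 := ((coord_deriv (hderiv T hTmem) 1).sub_const bb).pow 2
          have h3 := h1.add h2
          refine h3.congr_deriv ?_; norm_num
        have hwithin := hq.hasDerivWithinAt (s := Icc tst T)
        have hcongr : HasDerivWithinAt (fun _ : ℝ => r ^ 2)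
            (2 * (σ T 0 - c 0) * v T 0 + 2 * (σ T 1 - bb) * v T 1) (Icc tst T) T := by
          apply hwithin.congr
          · intro y hy; exact ((hPIcc y hy).1).symm
          · exact ((hPIcc T ⟨hTlb, le_refl T⟩).1).symm
        have hzero : HasDerivWithinAt (fun _ : ℝ => (r ^ 2 : ℝ)) 0 (Icc tst T) T :=
          hasDerivWithinAt_const T _ (r ^ 2)
        have hud : UniqueDiffWithinAt ℝ (Icc tst T) T :=
          (uniqueDiffOn_Icc hlt) T (right_mem_Icc.2 (le_of_lt hlt))
        have hDeq := hud.eq_deriv _ hcongr hzero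
        linarith [hDeq]
    have hTu : T < min t2 (T + r) := lt_min hTlt (by linarith)
    have hsubu : Icc T (min t2 (T + r)) ⊆ Icc t1 t2 := fun x hx =>
      ⟨le_trans hTmem.1 hx.1, le_trans hx.2 (min_le_left _ _)⟩
    have hav := avoidance hr hderiv hunit hlip hTmem hTdist htanT
    -- ψ stays positive on [T, u]
    have hψpos' : ∀ s ∈ Icc T (min t2 (T + r)), 0 < σ s 1 - bb := by
      by_contra hcon2
      push_neg at hcon2
      obtain ⟨s, hsmem, hsle⟩ := hcon2
      have hψcont : ContinuousOn (fun τ => σ τ 1 - bb) (Icc T s) := by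
        apply ContinuousOn.sub _ continuousOn_const
        exact hycont.mono (fun x hx => hsubu ⟨hx.1, le_trans hx.2 hsmem.2⟩)
      have hivt := intermediate_value_Icc' hsmem.1 hψcont
      have h0mem : (0 : ℝ) ∈ Icc (σ s 1 - bb) (σ T 1 - bb) := ⟨hsle, le_of_lt hψT⟩
      obtain ⟨s', hs'mem, hs'eq⟩ := hivt h0mem
      have hs'u : s' ∈ Icc T (min t2 (T + r)) := ⟨hs'mem.1, le_trans hs'mem.2 hsmem.2⟩
      have h1 := hav s' hs'u
      have hb := hx2lt s' (hsubu hs'u)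
      rw [hc0, sub_zero] at h1
      simp only at hs'eq
      rw [hs'eq] at h1
      norm_num at h1
      linarith
    -- on [T, u] the curve stays on the circle
    have hPu : ∀ s ∈ Icc T (min t2 (T + r)),
        (σ s 0 - c 0) ^ 2 + (σ s 1 - bb) ^ 2 = r ^ 2 ∧ 0 ≤ σ s 1 - bb := by
      intro s hsmem
      have h1 := hav s hsmem
      have h2 := hψpos' s hsmem
      have hsI : s ∈ Icc t1 t2 := hsubu hsmem
      have hmax' := hmaxx s hsI
      rw [hval s] at hmax'
      have hψle : σ s 1 - bb ≤ Real.sqrt (r ^ 2 - (σ s 0) ^ 2) := by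
        rw [hbbdef]; linarith
      have h3 : (0:ℝ) ≤ r ^ 2 - (σ s 0) ^ 2 := le_of_lt (by linarith [hx2lt s hsI])
      have hsq2 : (σ s 1 - bb) ^ 2 ≤ r ^ 2 - (σ s 0) ^ 2 := by
        calc (σ s 1 - bb) ^ 2 ≤ Real.sqrt (r ^ 2 - (σ s 0) ^ 2) ^ 2 :=
              pow_le_pow_left₀ (le_of_lt h2) hψle 2
          _ = r ^ 2 - (σ s 0) ^ 2 := Real.sq_sqrt h3
      constructor
      · rw [hc0, sub_zero] at h1 ⊢
        linarith [h1, hsq2]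
      · exact le_of_lt h2
    have huS : min t2 (T + r) ∈ S := by
      rw [hSdef]
      refine ⟨⟨le_trans hTlb (le_of_lt hTu), min_le_left _ _⟩, ?_⟩
      intro s hs
      rcases le_total s T with hsT | hTs
      · exact hPIcc s ⟨hs.1, hsT⟩
      · exact hPu s ⟨hTs, hs.2⟩
    have hle := le_csSup hSbdd huS
    rw [← hTdef] at hle
    linarith [hTu, hle]
end

section
/- Let σ : [0,ℓ] → ℝ², written in polar coordinates σ(t) = (−ρ(t)cos θ(t), ρ(t)sin θ(t)), be an arc-length parametrized C¹ curve with σ(0) = (−r,0), σ(ℓ) = (r,0), θ(0) = 0, θ(ℓ) = π, and suppose ρ(t) ≥ r whenever sin θ(t) > 0 (the curve stays outside the open upper half-disk of radius r centered at the origin). Then ℓ ≥ π r. -/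
/-!
Let `τ a` be the first time at which the polar angle reaches `a`, except that `τ π = ℓ`. The
point `σ (τ a)` has angle `a` and radius at least `r`, so for `a ≤ b` the chord between
`σ (τ a)` and `σ (τ b)` is at least as long as the corresponding chord `2 r sin ((b - a) / 2)` of
the circle of radius `r`, while by unit speed it is at most `τ b - τ a`. Summing over `n` equal
angular steps gives `ℓ ≥ 2 r n sin (π / (2 n))`, which tends to `π r`.
-/

open Real Set Filter Topology

lemma norm_sub_sq_of_polar {x y : EuclideanSpace ℝ (Fin 2)} {R₁ R₂ α β : ℝ}
    (hx : x 0 = -(R₁ * cos α) ∧ x 1 = R₁ * sin α)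
    (hy : y 0 = -(R₂ * cos β) ∧ y 1 = R₂ * sin β) :
    ‖y - x‖ ^ 2 = R₁ ^ 2 + R₂ ^ 2 - 2 * R₁ * R₂ * cos (β - α) := by
  rw [EuclideanSpace.norm_sq_eq, Fin.sum_univ_two]
  simp only [PiLp.sub_apply, Real.norm_eq_abs, sq_abs, hx.1, hx.2, hy.1, hy.2, cos_sub]
  linear_combination R₁ ^ 2 * sin_sq_add_cos_sq α + R₂ ^ 2 * sin_sq_add_cos_sq β

lemma two_mul_mul_sin_half_le_norm_sub_of_polar {x y : EuclideanSpace ℝ (Fin 2)}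
    {r R₁ R₂ α β : ℝ} (hr : 0 ≤ r) (h₁ : r ≤ R₁) (h₂ : r ≤ R₂)
    (hx : x 0 = -(R₁ * cos α) ∧ x 1 = R₁ * sin α)
    (hy : y 0 = -(R₂ * cos β) ∧ y 1 = R₂ * sin β) :
    2 * r * sin ((β - α) / 2) ≤ ‖y - x‖ := by
  refine le_of_abs_le (abs_le_of_sq_le_sq ?_ (norm_nonneg _))
  have hsin : sin ((β - α) / 2) ^ 2 = (1 - cos (β - α)) / 2 := by
    rw [sin_sq_eq_half_sub]; ring_nf
  have hcos : cos (β - α) ≤ 1 := cos_le_one _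
  have hR : r * r ≤ R₁ * R₂ := mul_le_mul h₁ h₂ hr (hr.trans h₁)
  rw [norm_sub_sq_of_polar hx hy, mul_pow, hsin]
  -- `R₁² + R₂² - 2 R₁ R₂ cos d = (R₁ - R₂)² + 2 R₁ R₂ (1 - cos d)` and `R₁ R₂ ≥ r²`
  nlinarith [sq_nonneg (R₁ - R₂), mul_nonneg (sub_nonneg.mpr hcos) (sub_nonneg.mpr hR)]

lemma norm_sub_le_sub_of_norm_deriv_le_one {E : Type*} [NormedAddCommGroup E] [NormedSpace ℝ E]
    {σ v : ℝ → E} {a b s t : ℝ} (hσ : ∀ t ∈ Icc a b, HasDerivAt σ (v t) t)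
    (hv : ∀ t ∈ Icc a b, ‖v t‖ ≤ 1) (hs : s ∈ Icc a b) (ht : t ∈ Icc a b) (hst : s ≤ t) :
    ‖σ t - σ s‖ ≤ t - s := by
  simpa [Real.norm_eq_abs, abs_of_nonneg (sub_nonneg.mpr hst)] using
    (convex_Icc a b).norm_image_sub_le_of_norm_hasDerivWithin_le
      (fun x hx => (hσ x hx).hasDerivWithinAt) hv hs ht

lemma nat_mul_le_sub_of_le_sub_succ {u : ℕ → ℝ} {c : ℝ} {n : ℕ}
    (h : ∀ i < n, c ≤ u (i + 1) - u i) : n * c ≤ u n - u 0 := by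
  rw [← Finset.sum_range_sub]
  simpa using Finset.card_nsmul_le_sum _ _ c fun i hi => h i (Finset.mem_range.mp hi)

lemma tendsto_nat_mul_sin_div {x : ℝ} (hx : 0 < x) :
    Tendsto (fun n : ℕ => n * sin (x / n)) atTop (𝓝 x) := by
  have hslope : Tendsto (fun t => t⁻¹ * sin t) (𝓝[>] 0) (𝓝 1) := by
    simpa using (hasDerivAt_sin 0).tendsto_slope_zero_right
  have hdiv : Tendsto (fun n : ℕ => x / n) atTop (𝓝[>] 0) :=
    tendsto_nhdsWithin_iff.mpr ⟨tendsto_const_div_atTop_nhds_zero_nat x,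
      eventually_atTop.mpr ⟨1, fun n hn => div_pos hx (by exact_mod_cast hn)⟩⟩
  have hlim := (hslope.comp hdiv).const_mul x
  rw [mul_one] at hlim
  refine hlim.congr' (eventually_atTop.mpr ⟨1, fun n hn => ?_⟩)
  have hn : (n : ℝ) ≠ 0 := by positivity
  simp only [Function.comp_apply, inv_div]
  field_simp

lemma exists_monotoneOn_hitting_time {θ : ℝ → ℝ} {a b : ℝ} (hab : a ≤ b)
    (hθ : ContinuousOn θ (Icc a b)) (hlt : θ a < θ b) :
    ∃ τ : ℝ → ℝ, MonotoneOn τ (Icc (θ a) (θ b)) ∧ τ (θ a) = a ∧ τ (θ b) = b ∧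
      ∀ c ∈ Icc (θ a) (θ b), τ c ∈ Icc a b ∧ θ (τ c) = c := by
  set S : ℝ → Set ℝ := fun c => Icc a b ∩ θ ⁻¹' Ici c
  have hbdd : ∀ c, BddBelow (S c) := fun c => ⟨a, fun t ht => ht.1.1⟩
  have hanti : ∀ c c', c ≤ c' → S c' ⊆ S c := fun c c' h t ht => ⟨ht.1, h.trans ht.2⟩
  have hmem : ∀ c ≤ θ b, sInf (S c) ∈ S c := fun c hc =>
    (hθ.preimage_isClosed_of_isClosed isClosed_Icc isClosed_Ici).csInf_mem
      ⟨b, ⟨hab, le_rfl⟩, hc⟩ (hbdd c)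
  have hhit : ∀ c ∈ Icc (θ a) (θ b), θ (sInf (S c)) = c := by
    intro c hc
    obtain ⟨⟨hat, htb⟩, hct⟩ := hmem c hc.2
    obtain ⟨x, hx, rfl⟩ := intermediate_value_Icc hat (hθ.mono (Icc_subset_Icc le_rfl htb))
      ⟨hc.1, hct⟩
    have : x ∈ S (θ x) := ⟨⟨hx.1, hx.2.trans htb⟩, (le_rfl : θ x ≤ θ x)⟩
    exact congrArg θ (le_antisymm (csInf_le (hbdd _) this) hx.2)
  refine ⟨fun c => if c < θ b then sInf (S c) else b, ?_, ?_, by simp, ?_⟩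
  · intro c hc c' hc' hcc'
    dsimp only
    split_ifs with h h' h'
    · exact csInf_le_csInf (hbdd c) ⟨b, ⟨hab, le_rfl⟩, hc'.2⟩ (hanti c c' hcc')
    · exact (hmem c hc.2).1.2
    · exact absurd (hcc'.trans_lt h') h
    · exact le_rfl
  · simp only [if_pos hlt]
    exact le_antisymm (csInf_le (hbdd _) ⟨⟨le_rfl, hab⟩, (le_rfl : θ a ≤ θ a)⟩)
      (le_csInf ⟨b, ⟨hab, le_rfl⟩, hlt.le⟩ fun t ht => ht.1.1)
  · intro c hc
    dsimp only
    split_ifs with h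
    · exact ⟨(hmem c hc.2).1, hhit c hc⟩
    · exact ⟨⟨hab, le_rfl⟩, le_antisymm (not_lt.mp h) hc.2⟩

lemma mul_le_sub_of_two_mul_sin_half_le_sub {τ : ℝ → ℝ} {r x : ℝ} (hx : 0 < x)
    (h : ∀ a ∈ Icc 0 x, ∀ b ∈ Icc 0 x, a ≤ b → 2 * r * sin ((b - a) / 2) ≤ τ b - τ a) :
    x * r ≤ τ x - τ 0 := by
  have hpoly : ∀ n : ℕ, 0 < n → 2 * r * (n * sin (x / 2 / n)) ≤ τ x - τ 0 := by
    intro n hn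
    have hn' : (0 : ℝ) < n := by exact_mod_cast hn
    have hnode : ∀ i ≤ n, (i : ℝ) * x / n ∈ Icc 0 x := fun i hi =>
      ⟨by positivity, div_le_of_le_mul₀ hn'.le hx.le (by
        rw [mul_comm]; gcongr)⟩
    have := nat_mul_le_sub_of_le_sub_succ (u := fun i => τ (i * x / n))
      (c := 2 * r * sin (x / 2 / n)) (n := n) fun i hi => by
        have hstep : (((i + 1 : ℕ) : ℝ) * x / n - i * x / n) / 2 = x / 2 / n := by
          push_cast; field_simp; ring
        simpa only [hstep] using
          h _ (hnode i hi.le) _ (hnode (i + 1) hi) (by gcongr; simp)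
    simp only [Nat.cast_zero, zero_mul, zero_div] at this
    rwa [mul_div_cancel_left₀ x hn'.ne', mul_left_comm] at this
  have hlim := (tendsto_nat_mul_sin_div (half_pos hx)).const_mul (2 * r)
  rw [show 2 * r * (x / 2) = x * r by ring] at hlim
  exact le_of_tendsto hlim (eventually_atTop.mpr ⟨1, hpoly⟩)

theorem end_length_general (r ℓ : ℝ) (hr : 0 < r) (hl : 0 ≤ ℓ)
    (σ v : ℝ → EuclideanSpace ℝ (Fin 2)) (ρ θ : ℝ → ℝ)
    (hderiv : ∀ t ∈ Set.Icc 0 ℓ, HasDerivAt σ (v t) t)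
    (hunit : ∀ t ∈ Set.Icc 0 ℓ, ‖v t‖ = 1)
    (hθcont : ContinuousOn θ (Set.Icc 0 ℓ))
    (hpolar : ∀ t ∈ Set.Icc 0 ℓ,
      σ t 0 = -(ρ t * Real.cos (θ t)) ∧ σ t 1 = ρ t * Real.sin (θ t))
    (hstart : σ 0 0 = -r ∧ σ 0 1 = 0) (hend : σ ℓ 0 = r ∧ σ ℓ 1 = 0)
    (hθ0 : θ 0 = 0) (hθl : θ ℓ = Real.pi)
    (hρ : ∀ t ∈ Set.Icc 0 ℓ, 0 < Real.sin (θ t) → r ≤ ρ t) :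
    Real.pi * r ≤ ℓ := by
  have hhit := exists_monotoneOn_hitting_time hl hθcont (by rw [hθ0, hθl]; exact pi_pos)
  rw [hθ0, hθl] at hhit
  obtain ⟨τ, hτmono, hτ0, hτπ, hτ⟩ := hhit
  have hpolarτ : ∀ a ∈ Icc 0 π, ∃ R, r ≤ R ∧
      σ (τ a) 0 = -(R * cos a) ∧ σ (τ a) 1 = R * sin a := by
    intro a ha
    obtain ⟨hτa, hθτa⟩ := hτ a ha
    rcases ha.1.eq_or_lt with rfl | ha0
    · exact ⟨r, le_rfl, by simp [hτ0, hstart.1], by simp [hτ0, hstart.2]⟩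
    rcases ha.2.lt_or_eq with haπ | rfl
    · refine ⟨ρ (τ a), hρ _ hτa (by rw [hθτa]; exact sin_pos_of_pos_of_lt_pi ha0 haπ), ?_⟩
      simpa only [hθτa] using hpolar _ hτa
    · exact ⟨r, le_rfl, by simp [hτπ, hend.1], by simp [hτπ, hend.2]⟩
  have hchord : ∀ a ∈ Icc 0 π, ∀ b ∈ Icc 0 π, a ≤ b →
      2 * r * sin ((b - a) / 2) ≤ τ b - τ a := by
    intro a ha b hb hab
    obtain ⟨R₁, h₁, hσa⟩ := hpolarτ a ha
    obtain ⟨R₂, h₂, hσb⟩ := hpolarτ b hb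
    calc 2 * r * sin ((b - a) / 2) ≤ ‖σ (τ b) - σ (τ a)‖ :=
          two_mul_mul_sin_half_le_norm_sub_of_polar hr.le h₁ h₂ hσa hσb
      _ ≤ τ b - τ a := norm_sub_le_sub_of_norm_deriv_le_one hderiv
          (fun t ht => (hunit t ht).le) (hτ a ha).1 (hτ b hb).1 (hτmono ha hb hab)
  simpa [hτ0, hτπ] using mul_le_sub_of_two_mul_sin_half_le_sub pi_pos hchord

/-- **Length of an end.** A unit-speed `C¹` curve `σ(t) = (−ρ(t)cos θ(t), ρ(t)sin θ(t))`
from `(−r,0)` to `(r,0)` with `θ(0) = 0`, `θ(ℓ) = π`, staying outside the open upper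
half-disk of radius `r` centered at the origin (`ρ ≥ r` whenever `sin θ > 0`), has length
`ℓ ≥ π r`. -/
theorem end_length (r ℓ : ℝ) (hr : 0 < r) (hl : 0 ≤ ℓ)
    (σ v : ℝ → EuclideanSpace ℝ (Fin 2)) (ρ θ : ℝ → ℝ)
    (hderiv : ∀ t ∈ Set.Icc 0 ℓ, HasDerivAt σ (v t) t)
    (hunit : ∀ t ∈ Set.Icc 0 ℓ, ‖v t‖ = 1)
    (hcont : ContinuousOn v (Set.Icc 0 ℓ))
    (hθcont : ContinuousOn θ (Set.Icc 0 ℓ))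
    (hpolar : ∀ t ∈ Set.Icc 0 ℓ,
      σ t 0 = -(ρ t * Real.cos (θ t)) ∧ σ t 1 = ρ t * Real.sin (θ t))
    (hstart : σ 0 0 = -r ∧ σ 0 1 = 0) (hend : σ ℓ 0 = r ∧ σ ℓ 1 = 0)
    (hθ0 : θ 0 = 0) (hθl : θ ℓ = Real.pi)
    (hρ : ∀ t ∈ Set.Icc 0 ℓ, 0 < Real.sin (θ t) → r ≤ ρ t) :
    Real.pi * r ≤ ℓ :=
  end_length_general r ℓ hr hl σ v ρ θ hderiv hunit hθcont hpolar hstart hend hθ0 hθl hρ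
end

section
/- Let σ : [t1,t2] → ℝ² be an arc-length parametrized C¹, piecewise C² curve with ‖σ''‖ ≤ 1/r (r > 0) and ‖σ(t1) − σ(t2)‖ < 2r. Let D1, D2 be the two closed disks of radius r with σ(t1), σ(t2) ∈ ∂D1 ∩ ∂D2. If the image of σ is contained in D1 ∪ D2, then σ([t1,t2]) has no point in int(D1 ∪ D2) \ cl(D1 ∩ D2). -/
/-!
If a curve of curvature at most `1 / r` stays in a closed disk of radius `r` about `c`, then
`t ↦ ‖σ t - c‖²` is convex: its second derivative is `2 (1 + ⟪σ'', σ - c⟫) ≥ 0`. Without second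
derivatives, this is the monotonicity of `⟪σ', σ - c⟫`, which decreases by at most `O(h³)` over
any time interval of length `h`.

Suppose `σ t` lies in the interior of `D₁ ∪ D₂` but outside `D₂`. The excursion of `σ` outside `D₂`
around `t` lies in `D₁`, meets the open disk at `σ t`, and has its ends in `D₂`. Slide the centre
from `c₁` to `c₂`. While the disk still contains the excursion, convexity keeps the excursion off
its boundary circle except possibly at the ends, and past the start the ends are strictly inside
too; so the disk can be slid a little further, and at `c₂` this contradicts `σ t ∉ D₂`.
-/

open Set Metric AffineMap Filter
open scoped RealInnerProductSpace

theorem monotoneOn_of_sub_le_mul_cube {φ : ℝ → ℝ} {I : Set ℝ} (hI : I.OrdConnected) {K : ℝ}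
    (h : ∀ s ∈ I, ∀ t ∈ I, s ≤ t → φ s - φ t ≤ K * (t - s) ^ 3) : MonotoneOn φ I := by
  have halve : ∀ n : ℕ, ∀ s ∈ I, ∀ t ∈ I, s ≤ t → φ s - φ t ≤ K * (t - s) ^ 3 * (1 / 4) ^ n := by
    intro n
    induction n with
    | zero => simpa using h
    | succ n ih =>
      intro s hs t ht hst
      have hm : (s + t) / 2 ∈ I := hI.out hs ht ⟨by linarith, by linarith⟩
      have h₁ := ih s hs _ hm (by linarith)
      have h₂ := ih _ hm t ht (by linarith)
      calc φ s - φ t = (φ s - φ ((s + t) / 2)) + (φ ((s + t) / 2) - φ t) := by ring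
        _ ≤ K * ((s + t) / 2 - s) ^ 3 * (1 / 4) ^ n + K * (t - (s + t) / 2) ^ 3 * (1 / 4) ^ n :=
          add_le_add h₁ h₂
        _ = K * (t - s) ^ 3 * (1 / 4) ^ (n + 1) := by ring
  intro s hs t ht hst
  have hlim : Tendsto (fun n : ℕ => K * (t - s) ^ 3 * (1 / 4 : ℝ) ^ n) atTop (nhds 0) := by
    simpa using (tendsto_pow_atTop_nhds_zero_of_lt_one (r := (1 / 4 : ℝ)) (by norm_num)
      (by norm_num)).const_mul (K * (t - s) ^ 3)
  linarith [ge_of_tendsto' hlim fun n => halve n s hs t ht hst]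

theorem ConvexOn.lt_of_mem_Ioo {f : ℝ → ℝ} {a b M t₀ t : ℝ} (hf : ConvexOn ℝ (Icc a b) f)
    (ha : f a ≤ M) (hb : f b ≤ M) (ht₀ : t₀ ∈ Icc a b) (h₀ : f t₀ < M) (ht : t ∈ Ioo a b) :
    f t < M := by
  by_contra! hM
  have hab : a ≤ b := ht₀.1.trans ht₀.2
  rcases lt_trichotomy t t₀ with hlt | rfl | hgt
  · have := hf.slope_mono_adjacent (left_mem_Icc.2 hab) ht₀ ht.1 hlt
    have h₁ : 0 ≤ (f t - f a) / (t - a) := div_nonneg (by linarith) (by linarith [ht.1])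
    have h₂ : (f t₀ - f t) / (t₀ - t) < 0 := div_neg_of_neg_of_pos (by linarith) (by linarith)
    linarith
  · linarith
  · have := hf.slope_mono_adjacent ht₀ (right_mem_Icc.2 hab) hgt ht.2
    have h₁ : 0 < (f t - f t₀) / (t - t₀) := div_pos (by linarith) (by linarith)
    have h₂ : (f b - f t) / (b - t) ≤ 0 :=
      div_nonpos_of_nonpos_of_nonneg (by linarith) (by linarith [ht.2])
    linarith

theorem ContinuousOn.exists_excursion_above {f : ℝ → ℝ} {a b t R : ℝ}
    (hf : ContinuousOn f (Icc a b)) (ha : f a ≤ R) (hb : f b ≤ R) (ht : t ∈ Icc a b)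
    (hR : R < f t) :
    ∃ a' b', t ∈ Ioo a' b' ∧ Icc a' b' ⊆ Icc a b ∧ f a' ≤ R ∧ f b' ≤ R ∧
      ∀ u ∈ Ioo a' b', R < f u := by
  have hcompact : ∀ {a' b'}, Icc a' b' ⊆ Icc a b → IsCompact (Icc a' b' ∩ f ⁻¹' Iic R) :=
    fun hsub => isCompact_Icc.of_isClosed_subset
      ((hf.mono hsub).preimage_isClosed_of_isClosed isClosed_Icc isClosed_Iic) inter_subset_left
  obtain ⟨a', ⟨⟨haa', ha't⟩, ha'R⟩, ha'max⟩ :=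
    (hcompact (Icc_subset_Icc_right ht.2)).exists_isGreatest ⟨a, ⟨left_mem_Icc.2 ht.1, ha⟩⟩
  obtain ⟨b', ⟨⟨htb', hb'b⟩, hb'R⟩, hb'min⟩ :=
    (hcompact (Icc_subset_Icc_left ht.1)).exists_isLeast ⟨b, ⟨right_mem_Icc.2 ht.2, hb⟩⟩
  refine ⟨a', b', ⟨ha't.lt_of_ne ?_, htb'.lt_of_ne ?_⟩, Icc_subset_Icc haa' hb'b, ha'R, hb'R, ?_⟩
  · rintro rfl; exact hR.not_ge ha'R
  · rintro rfl; exact hR.not_ge hb'R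
  intro u hu
  by_contra! hu'
  rcases le_total u t with hut | htu
  · exact hu.1.not_ge (ha'max ⟨⟨haa'.trans hu.1.le, hut⟩, hu'⟩)
  · exact hu.2.not_ge (hb'min ⟨⟨htu, hb'b.trans' hu.2.le⟩, hu'⟩)

variable {E : Type*} [NormedAddCommGroup E] [InnerProductSpace ℝ E]

theorem dist_lineMap_sq (x p q : E) (s : ℝ) :
    dist x (lineMap p q s) ^ 2 =
      (1 - s) * dist x p ^ 2 + s * dist x q ^ 2 - s * (1 - s) * dist p q ^ 2 := by
  have hx : x - lineMap p q s = (1 - s) • (x - p) + s • (x - q) := by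
    rw [lineMap_apply_module]; module
  have hpq : p - q = (x - q) - (x - p) := by abel
  simp only [dist_eq_norm, hx, hpq, norm_add_sq_real, norm_sub_sq_real, norm_smul,
    real_inner_smul_left, real_inner_smul_right, mul_pow, Real.norm_eq_abs, sq_abs,
    real_inner_comm (x - p)]
  ring

theorem mem_ball_lineMap_of_mem_closedBall {x p q : E} {r s : ℝ} (hp : x ∈ closedBall p r)
    (hq : x ∈ closedBall q r) (hpq : p ≠ q) (hs : s ∈ Ioo 0 1) : x ∈ ball (lineMap p q s) r := by
  have hr : 0 ≤ r := dist_nonneg.trans hp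
  have hgap : 0 < s * (1 - s) * dist p q ^ 2 :=
    mul_pos (mul_pos hs.1 (sub_pos.2 hs.2)) (pow_pos (dist_pos.2 hpq) 2)
  have hsq : dist x (lineMap p q s) ^ 2 < r ^ 2 := by
    rw [dist_lineMap_sq]
    nlinarith [pow_le_pow_left₀ dist_nonneg hp 2, pow_le_pow_left₀ dist_nonneg hq 2, hs.1, hs.2]
  exact mem_ball.2 (lt_of_pow_lt_pow_left₀ 2 hr hsq)

theorem exists_pos_mapsTo_closedBall_lineMap {σ : ℝ → E} {a b r : ℝ} {p q : E}
    (hσ : ContinuousOn σ (Icc a b)) (hin : MapsTo σ (Icc a b) (closedBall p r))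
    (hlt : MapsTo σ (Ioo a b) (ball p r)) (ha : σ a ∈ closedBall q r)
    (hb : σ b ∈ closedBall q r) :
    ∃ ε : ℝ, 0 < ε ∧ ∀ u ∈ Icc 0 ε, MapsTo σ (Icc a b) (closedBall (lineMap p q u) r) := by
  rcases eq_or_ne p q with rfl | hpq
  · exact ⟨1, one_pos, fun u _ => by simpa only [lineMap_same_apply] using hin⟩
  set d := dist p q
  have hd : 0 < d := dist_pos.2 hpq
  -- `K` avoids the ends, so on it the curve is uniformly inside `ball p r`; off `K` the curve
  -- is close enough to `q` that moving the centre towards `q` keeps it inside (`dist_lineMap_sq`).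
  set K := Icc a b ∩ (fun t => dist (σ t) q ^ 2) ⁻¹' Ici (r ^ 2 + d ^ 2 / 2)
  have hq : ContinuousOn (fun t => dist (σ t) q ^ 2) (Icc a b) := by fun_prop
  have hK : IsCompact K := isCompact_Icc.of_isClosed_subset
    (hq.preimage_isClosed_of_isClosed isClosed_Icc isClosed_Ici) inter_subset_left
  have hKIoo : K ⊆ Ioo a b := by
    rintro t ⟨ht, htq⟩
    have hend : ∀ {t'}, σ t' ∈ closedBall q r → t ≠ t' := by
      rintro t' ht' rfl
      have hle : dist (σ t) q ^ 2 ≤ r ^ 2 := pow_le_pow_left₀ dist_nonneg ht' 2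
      have hge : r ^ 2 + d ^ 2 / 2 ≤ dist (σ t) q ^ 2 := htq
      linarith [pow_pos hd 2]
    exact ⟨ht.1.lt_of_ne (hend ha).symm, ht.2.lt_of_ne (hend hb)⟩
  obtain ⟨δ, hδ, hδK⟩ := hK.exists_forall_le' (f := fun t => r - dist (σ t) p)
    ((continuousOn_const.sub (by fun_prop)).mono inter_subset_left)
    fun t ht => sub_pos.2 (hlt (hKIoo ht))
  refine ⟨min (1 / 2) (δ / d), by positivity, fun u hu t ht => ?_⟩
  have hu₁ : u ≤ 1 / 2 := hu.2.trans (min_le_left _ _)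
  have hu₂ : u * d ≤ δ := (le_div_iff₀ hd).1 (hu.2.trans (min_le_right _ _))
  by_cases htK : t ∈ K
  · calc dist (σ t) (lineMap p q u) ≤ dist (σ t) p + dist p (lineMap p q u) := dist_triangle _ _ _
      _ = dist (σ t) p + u * d := by rw [dist_left_lineMap, Real.norm_of_nonneg hu.1]
      _ ≤ r := by linarith [hδK t htK]
  · have hr : 0 ≤ r := dist_nonneg.trans (hin ht)
    have htq : dist (σ t) q ^ 2 < r ^ 2 + d ^ 2 / 2 := by
      simpa [K, ht] using htK
    have hsq : dist (σ t) (lineMap p q u) ^ 2 ≤ r ^ 2 := by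
      rw [dist_lineMap_sq]
      have hp : dist (σ t) p ^ 2 ≤ r ^ 2 := pow_le_pow_left₀ dist_nonneg (hin ht) 2
      nlinarith [mul_le_mul_of_nonneg_left hp (by linarith : (0 : ℝ) ≤ 1 - u),
        mul_le_mul_of_nonneg_left htq.le hu.1,
        mul_nonneg (mul_nonneg hu.1 (by linarith : (0 : ℝ) ≤ 1 / 2 - u)) (sq_nonneg d)]
    exact mem_closedBall.2 (pow_le_pow_iff_left₀ dist_nonneg hr two_ne_zero |>.1 hsq)

/-- Curvature at most `1 / r`, encoded by a `(1 / r)`-Lipschitz unit velocity `v` of `σ` on `I`. -/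
structure IsConstrainedCurve (r : ℝ) (I : Set ℝ) (σ v : ℝ → E) : Prop where
  hasDerivAt : ∀ t ∈ I, HasDerivAt σ (v t) t
  norm_eq_one : ∀ t ∈ I, ‖v t‖ = 1
  norm_sub_le : ∀ s ∈ I, ∀ t ∈ I, ‖v s - v t‖ ≤ (1 / r) * |s - t|

namespace IsConstrainedCurve

variable {r : ℝ} {I : Set ℝ} {σ v : ℝ → E} {c : E}

theorem mono {J : Set ℝ} (h : IsConstrainedCurve r I σ v) (hJI : J ⊆ I) :
    IsConstrainedCurve r J σ v :=
  ⟨fun t ht => h.hasDerivAt t (hJI ht), fun t ht => h.norm_eq_one t (hJI ht),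
    fun s hs t ht => h.norm_sub_le s (hJI hs) t (hJI ht)⟩

theorem continuousOn (h : IsConstrainedCurve r I σ v) : ContinuousOn σ I :=
  fun t ht => (h.hasDerivAt t ht).continuousAt.continuousWithinAt

theorem one_sub_le_inner (h : IsConstrainedCurve r I σ v) {s u : ℝ} (hs : s ∈ I) (hu : u ∈ I) :
    1 - (u - s) ^ 2 / (2 * r ^ 2) ≤ ⟪v s, v u⟫ := by
  have hnorm : ‖v s - v u‖ ^ 2 = 2 - 2 * ⟪v s, v u⟫ := by
    rw [norm_sub_sq_real, h.norm_eq_one s hs, h.norm_eq_one u hu]; ring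
  have hsq : ‖v s - v u‖ ^ 2 ≤ (u - s) ^ 2 / r ^ 2 := by
    calc ‖v s - v u‖ ^ 2 ≤ (1 / r * |s - u|) ^ 2 :=
          pow_le_pow_left₀ (norm_nonneg _) (h.norm_sub_le s hs u hu) 2
      _ = (u - s) ^ 2 / r ^ 2 := by rw [mul_pow, sq_abs]; ring
  rw [show (u - s) ^ 2 / (2 * r ^ 2) = (u - s) ^ 2 / r ^ 2 / 2 by ring]
  linarith

theorem inner_sub_inner_le (h : IsConstrainedCurve r I σ v) (hI : I.OrdConnected) (hr : 0 < r)
    (hin : MapsTo σ I (closedBall c r)) {s t : ℝ} (hs : s ∈ I) (ht : t ∈ I) (hst : s ≤ t) :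
    ⟪v s, σ s - c⟫ - ⟪v t, σ t - c⟫ ≤ 1 / (2 * r ^ 2) * (t - s) ^ 3 := by
  have hsub : Icc s t ⊆ I := hI.out hs ht
  have halign : ∀ u ∈ Icc s t, 1 - (t - s) ^ 2 / (2 * r ^ 2) ≤ ⟪v s, v u⟫ := fun u hu =>
    le_trans (by gcongr; exacts [sub_nonneg.2 hu.1, hu.2]) (h.one_sub_le_inner hs (hsub hu))
  have hmvt : (1 - (t - s) ^ 2 / (2 * r ^ 2)) * (t - s) ≤ ⟪v s, σ t⟫ - ⟪v s, σ s⟫ := by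
    have hderiv : ∀ u ∈ Icc s t, HasDerivAt (fun u => ⟪v s, σ u⟫) ⟪v s, v u⟫ u := fun u hu => by
      simpa using (hasDerivAt_const u (v s)).inner ℝ (h.hasDerivAt u (hsub hu))
    refine (convex_Icc s t).mul_sub_le_image_sub_of_le_deriv
      (fun u hu => (hderiv u hu).continuousAt.continuousWithinAt)
      (fun u hu => (hderiv u (interior_subset hu)).differentiableAt.differentiableWithinAt)
      (fun u hu => ?_) s (left_mem_Icc.2 hst) t (right_mem_Icc.2 hst) hst
    rw [(hderiv u (interior_subset hu)).deriv]
    exact halign u (interior_subset hu)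
  have hturn : |⟪v t - v s, σ t - c⟫| ≤ t - s := by
    calc |⟪v t - v s, σ t - c⟫| ≤ ‖v t - v s‖ * ‖σ t - c‖ := abs_real_inner_le_norm _ _
      _ ≤ (1 / r * |t - s|) * r :=
        mul_le_mul (h.norm_sub_le t ht s hs) (mem_closedBall_iff_norm.1 (hin ht)) (norm_nonneg _)
          (by positivity)
      _ = t - s := by rw [abs_of_nonneg (sub_nonneg.2 hst)]; field_simp
  have hsplit : ⟪v t, σ t - c⟫ - ⟪v s, σ s - c⟫ =
      ⟪v t - v s, σ t - c⟫ + (⟪v s, σ t⟫ - ⟪v s, σ s⟫) := by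
    simp only [inner_sub_left, inner_sub_right]; ring
  have hcube : (1 - (t - s) ^ 2 / (2 * r ^ 2)) * (t - s) =
      (t - s) - 1 / (2 * r ^ 2) * (t - s) ^ 3 := by
    ring
  linarith [(abs_le.1 hturn).1]

theorem convexOn_dist_sq (h : IsConstrainedCurve r I σ v) (hI : I.OrdConnected) (hr : 0 < r)
    (hin : MapsTo σ I (closedBall c r)) : ConvexOn ℝ I (fun t => dist (σ t) c ^ 2) := by
  have hderiv : ∀ t ∈ I, HasDerivAt (fun t => dist (σ t) c ^ 2) (2 * ⟪v t, σ t - c⟫) t := by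
    intro t ht
    simp only [dist_eq_norm]
    simpa only [real_inner_comm] using ((h.hasDerivAt t ht).sub_const c).norm_sq
  have hmono : MonotoneOn (fun t => ⟪v t, σ t - c⟫) I :=
    monotoneOn_of_sub_le_mul_cube hI fun s hs t ht hst => h.inner_sub_inner_le hI hr hin hs ht hst
  refine MonotoneOn.convexOn_of_deriv hI.convex
    (fun t ht => (hderiv t ht).continuousAt.continuousWithinAt)
    (fun t ht => (hderiv t (interior_subset ht)).differentiableAt.differentiableWithinAt)
    fun x hx y hy hxy => ?_
  rw [(hderiv x (interior_subset hx)).deriv, (hderiv y (interior_subset hy)).deriv]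
  linarith [hmono (interior_subset hx) (interior_subset hy) hxy]

theorem mapsTo_closedBall_of_endpoints {a b t₀ : ℝ} {c' : E}
    (h : IsConstrainedCurve r (Icc a b) σ v) (hr : 0 < r)
    (hin : MapsTo σ (Icc a b) (closedBall c r)) (ht₀ : t₀ ∈ Icc a b) (h₀ : σ t₀ ∈ ball c r)
    (ha : σ a ∈ closedBall c' r) (hb : σ b ∈ closedBall c' r) :
    MapsTo σ (Icc a b) (closedBall c' r) := by
  rcases eq_or_ne c c' with rfl | hcc'
  · exact hin
  have hab : a ≤ b := ht₀.1.trans ht₀.2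
  set S := {s : ℝ | MapsTo σ (Icc a b) (closedBall (lineMap c c' s) r)}
  suffices Icc 0 1 ⊆ S by simpa [S] using this (right_mem_Icc.2 zero_le_one)
  have hS : IsClosed S := by
    have : S = ⋂ t ∈ Icc a b, {s | dist (σ t) (lineMap c c' s) ≤ r} := by
      ext s; simp [S, MapsTo]
    rw [this]
    exact isClosed_biInter fun t _ => isClosed_le (by fun_prop) continuous_const
  refine (hS.inter isClosed_Icc).Icc_subset_of_forall_mem_nhdsWithin
    (by simpa [S] using hin) fun x ⟨hxS, hx0, hx1⟩ => ?_
  have hstrict : ∃ t₁ ∈ Icc a b, σ t₁ ∈ ball (lineMap c c' x) r := by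
    rcases hx0.eq_or_lt with rfl | hx0
    · exact ⟨t₀, ht₀, by simpa using h₀⟩
    · exact ⟨a, left_mem_Icc.2 hab,
        mem_ball_lineMap_of_mem_closedBall (hin (left_mem_Icc.2 hab)) ha hcc' ⟨hx0, hx1⟩⟩
  obtain ⟨t₁, ht₁, h₁⟩ := hstrict
  have hconv := h.convexOn_dist_sq ordConnected_Icc hr hxS
  have hinner : MapsTo σ (Ioo a b) (ball (lineMap c c' x) r) := fun t ht => by
    have hsq := hconv.lt_of_mem_Ioo (M := r ^ 2)
      (pow_le_pow_left₀ dist_nonneg (hxS (left_mem_Icc.2 hab)) 2)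
      (pow_le_pow_left₀ dist_nonneg (hxS (right_mem_Icc.2 hab)) 2) ht₁
      (pow_lt_pow_left₀ (mem_ball.1 h₁) dist_nonneg two_ne_zero) ht
    exact mem_ball.2 (lt_of_pow_lt_pow_left₀ 2 hr.le hsq)
  obtain ⟨ε, hε, hpush⟩ := exists_pos_mapsTo_closedBall_lineMap h.continuousOn hxS hinner ha hb
  have hsub : Icc x (x + ε * (1 - x)) ⊆ S := by
    intro s hs
    have hu : (s - x) / (1 - x) ∈ Icc 0 ε := by
      constructor
      · exact div_nonneg (by linarith [hs.1]) (by linarith)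
      · rw [div_le_iff₀ (by linarith)]; linarith [hs.2]
    have := hpush _ hu
    rwa [lineMap_lineMap_left, show 1 - (1 - (s - x) / (1 - x)) * (1 - x) = s by
      field_simp; ring] at this
  exact mem_of_superset (Icc_mem_nhdsGT (by nlinarith)) hsub

theorem mem_closedBall_of_mem_interior_union {t₁ t₂ t : ℝ} {c' : E}
    (h : IsConstrainedCurve r (Icc t₁ t₂) σ v) (hr : 0 < r)
    (hin : MapsTo σ (Icc t₁ t₂) (closedBall c r ∪ closedBall c' r))
    (h₁ : σ t₁ ∈ closedBall c' r) (h₂ : σ t₂ ∈ closedBall c' r) (ht : t ∈ Icc t₁ t₂)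
    (hint : σ t ∈ interior (closedBall c r ∪ closedBall c' r)) : σ t ∈ closedBall c' r := by
  by_contra hout
  have hball : σ t ∈ ball c r := by
    rw [← interior_closedBall c hr.ne']
    exact interior_maximal (fun y hy => (interior_subset hy.1).resolve_right hy.2)
      (isOpen_interior.sdiff isClosed_closedBall) ⟨hint, hout⟩
  obtain ⟨a, b, htab, hsub, ha, hb, hexc⟩ := ContinuousOn.exists_excursion_above
    (f := fun u => dist (σ u) c') (by have := h.continuousOn; fun_prop) h₁ h₂ ht (not_le.1 hout)
  have hclosure : closure (Ioo a b) = Icc a b := closure_Ioo (htab.1.trans htab.2).ne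
  have hD : MapsTo σ (Icc a b) (closedBall c r) := by
    have hD : MapsTo σ (Ioo a b) (closedBall c r) := fun u hu =>
      (hin (hsub (Ioo_subset_Icc_self hu))).resolve_right (hexc u hu).not_ge
    simpa only [hclosure, isClosed_closedBall.closure_eq] using
      hD.closure_of_continuousOn (hclosure ▸ h.continuousOn.mono hsub)
  exact hout ((h.mono hsub).mapsTo_closedBall_of_endpoints hr hD (Ioo_subset_Icc_self htab) hball
    ha hb (Ioo_subset_Icc_self htab))

end IsConstrainedCurve

theorem lens_rigidity_general (r t1 t2 : ℝ) (hr : 0 < r)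
    (σ v : ℝ → EuclideanSpace ℝ (Fin 2))
    (hderiv : ∀ t ∈ Set.Icc t1 t2, HasDerivAt σ (v t) t)
    (hunit : ∀ t ∈ Set.Icc t1 t2, ‖v t‖ = 1)
    (hlip : ∀ s ∈ Set.Icc t1 t2, ∀ t ∈ Set.Icc t1 t2, ‖v s - v t‖ ≤ (1 / r) * |s - t|)
    (c1 c2 : EuclideanSpace ℝ (Fin 2))
    (hc1 : dist (σ t1) c1 = r ∧ dist (σ t2) c1 = r)
    (hc2 : dist (σ t1) c2 = r ∧ dist (σ t2) c2 = r)
    (hin : ∀ t ∈ Set.Icc t1 t2,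
      σ t ∈ Metric.closedBall c1 r ∪ Metric.closedBall c2 r) :
    ∀ t ∈ Set.Icc t1 t2,
      σ t ∉ interior (Metric.closedBall c1 r ∪ Metric.closedBall c2 r) \
            closure (Metric.closedBall c1 r ∩ Metric.closedBall c2 r) := by
  have hσ : IsConstrainedCurve r (Icc t1 t2) σ v := ⟨hderiv, hunit, hlip⟩
  rintro t ht ⟨hint, hlens⟩
  rw [(isClosed_closedBall.inter isClosed_closedBall).closure_eq] at hlens
  have hin' : MapsTo σ (Icc t1 t2) (closedBall c2 r ∪ closedBall c1 r) := fun u hu =>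
    (hin u hu).symm
  exact hlens ⟨hσ.mem_closedBall_of_mem_interior_union hr hin' hc1.1.le hc1.2.le ht
      (by rwa [union_comm]),
    hσ.mem_closedBall_of_mem_interior_union hr hin hc2.1.le hc2.2.le ht hint⟩

/-- **Rigidity.** A unit-speed `κ`-constrained curve (`‖σ''‖ ≤ 1/r`, encoded by a
`(1/r)`-Lipschitz unit tangent `v`) whose endpoints are at distance `< 2r`, lying in the
union `D1 ∪ D2` of the two radius-`r` closed disks through its endpoints, has no point in
`int(D1 ∪ D2) \ cl(D1 ∩ D2)`. -/
theorem lens_rigidity (r t1 t2 : ℝ) (hr : 0 < r) (ht : t1 ≤ t2)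
    (σ v : ℝ → EuclideanSpace ℝ (Fin 2))
    (hderiv : ∀ t ∈ Set.Icc t1 t2, HasDerivAt σ (v t) t)
    (hunit : ∀ t ∈ Set.Icc t1 t2, ‖v t‖ = 1)
    (hcont : ContinuousOn v (Set.Icc t1 t2))
    (hlip : ∀ s ∈ Set.Icc t1 t2, ∀ t ∈ Set.Icc t1 t2, ‖v s - v t‖ ≤ (1 / r) * |s - t|)
    (hdist : dist (σ t1) (σ t2) < 2 * r)
    (c1 c2 : EuclideanSpace ℝ (Fin 2)) (hc12 : c1 ≠ c2)
    (hc1 : dist (σ t1) c1 = r ∧ dist (σ t2) c1 = r)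
    (hc2 : dist (σ t1) c2 = r ∧ dist (σ t2) c2 = r)
    (hin : ∀ t ∈ Set.Icc t1 t2,
      σ t ∈ Metric.closedBall c1 r ∪ Metric.closedBall c2 r) :
    ∀ t ∈ Set.Icc t1 t2,
      σ t ∉ interior (Metric.closedBall c1 r ∪ Metric.closedBall c2 r) \
            closure (Metric.closedBall c1 r ∩ Metric.closedBall c2 r) :=
  lens_rigidity_general r t1 t2 hr σ v hderiv hunit hlip c1 c2 hc1 hc2 hin
end

section
/- Let σ : S¹ → ℝ² be an arc-length parametrized C¹ simple closed curve of length L, and suppose σ is C² with ‖σ''‖ ≤ κ everywhere. Then L ≥ 2π/κ. -/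
/-!
Write the unit tangent as `exp (θ t * I)` with a differentiable angle `θ`; then `|θ'| ≤ κ`, so `θ`
is `κ`-Lipschitz. Since the curve closes up, `θ L - θ 0 ∈ 2πℤ` and `∫₀ᴸ cos (θ - c) = 0` for every
`c`; the latter forces `θ` to oscillate by at least `π` on `[0, L]`. If the winding is nonzero,
`κ L ≥ |θ L - θ 0| ≥ 2π`; otherwise `θ` must climb by `π` and come back, so again `κ L ≥ 2π`.
-/

open Complex Set intervalIntegral
open scoped ComplexConjugate InnerProductSpace Real

theorem Function.Periodic.periodic_of_hasDerivAt {E : Type*} [NormedAddCommGroup E]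
    [NormedSpace ℝ E] {f f' : ℝ → E} {c : ℝ} (hf : Function.Periodic f c)
    (h : ∀ t, HasDerivAt f (f' t) t) : Function.Periodic f' c := fun t => by
  have hshift := (h (t + c)).comp_add_const t c
  rw [show (fun s => f (s + c)) = f from funext hf] at hshift
  exact hshift.unique (h t)

theorem inner_eq_zero_of_hasDerivAt_of_norm_eq {E : Type*} [NormedAddCommGroup E]
    [InnerProductSpace ℝ E] {u w : ℝ → E} {r : ℝ} (hu : ∀ t, HasDerivAt u (w t) t)
    (hnorm : ∀ t, ‖u t‖ = r) (t : ℝ) : ⟪u t, w t⟫_ℝ = 0 := by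
  have hconst : (fun s => ⟪u s, u s⟫_ℝ) = fun _ => r ^ 2 := by
    funext s
    rw [real_inner_self_eq_norm_sq, hnorm]
  have h := (hu t).inner ℝ (hu t)
  rw [hconst, real_inner_comm (u t) (w t)] at h
  linarith [h.unique (hasDerivAt_const t (r ^ 2))]

theorem exists_angle_lift {u w : ℝ → ℂ} (hu : ∀ t, HasDerivAt u (w t) t) (hw : Continuous w)
    (hnorm : ∀ t, ‖u t‖ = 1) :
    ∃ θ : ℝ → ℝ, (∀ t, HasDerivAt θ (conj (u t) * w t).im t) ∧ ∀ t, u t = exp (θ t * I) := by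
  have hucont : Continuous u := continuous_iff_continuousAt.2 fun t => (hu t).continuousAt
  set ω : ℝ → ℝ := fun t => (conj (u t) * w t).im
  have hω : Continuous ω := by fun_prop
  set θ : ℝ → ℝ := fun t => arg (u 0) + ∫ s in 0..t, ω s
  have hθ : ∀ t, HasDerivAt θ (ω t) t := fun t =>
    (hω.integral_hasStrictDerivAt 0 t).hasDerivAt.const_add _
  have hw_eq : ∀ t, w t = ω t * I * u t := by
    intro t
    have hre : (conj (u t) * w t).re = 0 := by
      rw [mul_comm, ← Complex.inner]
      exact inner_eq_zero_of_hasDerivAt_of_norm_eq hu hnorm t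
    have hu1 : u t * conj (u t) = 1 := by
      rw [mul_conj, normSq_eq_norm_sq, hnorm]; simp
    calc w t = u t * conj (u t) * w t := by rw [hu1, one_mul]
      _ = u t * ((conj (u t) * w t).re + (conj (u t) * w t).im * I) := by rw [re_add_im]; ring
      _ = ω t * I * u t := by rw [hre, ofReal_zero]; ring
  have hF : ∀ t, HasDerivAt (fun t => u t * exp (-(θ t * I))) 0 t := by
    intro t
    have hE := ((hθ t).ofReal_comp.mul_const I).fun_neg.cexp
    refine ((hu t).mul hE).congr_deriv ?_
    rw [hw_eq]; ring
  refine ⟨θ, hθ, fun t => ?_⟩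
  have hconst := is_const_of_deriv_eq_zero (fun t => (hF t).differentiableAt)
    (fun t => (hF t).deriv) t 0
  have hu0 : exp (arg (u 0) * I) = u 0 := by
    simpa [hnorm] using norm_mul_exp_arg_mul_I (u 0)
  have hθ0 : θ 0 = arg (u 0) := by simp [θ]
  have hu0_ne : u 0 ≠ 0 := by simp [← norm_ne_zero_iff, hnorm]
  rwa [exp_neg, exp_neg, hθ0, hu0, mul_inv_cancel₀ hu0_ne, mul_inv_eq_one₀ (exp_ne_zero _)]
    at hconst

theorem exists_pi_le_sub_of_integral_cos_sub_eq_zero {θ : ℝ → ℝ} {L : ℝ} (hL : 0 < L)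
    (hθ : ContinuousOn θ (Icc 0 L)) (h : ∀ c, ∫ t in 0..L, Real.cos (θ t - c) = 0) :
    ∃ s ∈ Icc 0 L, ∃ t ∈ Icc 0 L, π ≤ θ s - θ t := by
  obtain ⟨s, hs, hmax⟩ := isCompact_Icc.exists_isMaxOn (nonempty_Icc.2 hL.le) hθ
  obtain ⟨t, ht, hmin⟩ := isCompact_Icc.exists_isMinOn (nonempty_Icc.2 hL.le) hθ
  refine ⟨s, hs, t, ht, ?_⟩
  by_contra! hlt
  set δ := (θ s - θ t) / 2 with hδ_def
  set c := (θ s + θ t) / 2 with hc_def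
  have hδ : 0 ≤ δ := by linarith [isMaxOn_iff.1 hmax t ht]
  have hcos_pos : 0 < Real.cos δ :=
    Real.cos_pos_of_mem_Ioo ⟨by linarith [Real.pi_pos], by linarith⟩
  -- the values of `θ` on `[0, L]` stay within `δ < π / 2` of `c`
  have hbound : ∀ r ∈ Icc 0 L, Real.cos δ ≤ Real.cos (θ r - c) := by
    intro r hr
    rw [← Real.cos_abs (θ r - c)]
    refine Real.cos_le_cos_of_nonneg_of_le_pi (abs_nonneg _) (by linarith [Real.pi_pos]) ?_
    rw [abs_le]
    constructor <;> linarith [isMaxOn_iff.1 hmax r hr, isMinOn_iff.1 hmin r hr]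
  have hmono := integral_mono_on (g := fun r => Real.cos (θ r - c)) hL.le
    (intervalIntegrable_const (μ := MeasureTheory.volume))
    ((Real.continuous_cos.comp_continuousOn (hθ.sub continuousOn_const)).intervalIntegrable_of_Icc
      hL.le) hbound
  rw [h c, integral_const, sub_zero, smul_eq_mul] at hmono
  linarith [mul_pos hL hcos_pos]

theorem two_mul_abs_sub_le_of_abs_sub_le_mul {θ : ℝ → ℝ} {κ L : ℝ}
    (hθ : ∀ s t, |θ t - θ s| ≤ κ * |t - s|) (hper : θ L = θ 0) {s t : ℝ}
    (hs : s ∈ Icc 0 L) (ht : t ∈ Icc 0 L) : 2 * |θ s - θ t| ≤ κ * L := by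
  wlog hst : s ≤ t generalizing s t
  · rw [abs_sub_comm]
    exact this ht hs (le_of_not_ge hst)
  have hdirect : |θ s - θ t| ≤ κ * (t - s) := by
    simpa [abs_sub_comm, abs_of_nonneg (sub_nonneg.2 hst)] using hθ s t
  have hround : |θ s - θ t| ≤ κ * s + κ * (L - t) :=
    calc |θ s - θ t| = |(θ s - θ 0) + (θ L - θ t)| := by rw [hper]; ring_nf
      _ ≤ |θ s - θ 0| + |θ L - θ t| := abs_add_le _ _
      _ ≤ κ * s + κ * (L - t) := add_le_add
          (by simpa [abs_of_nonneg hs.1] using hθ 0 s)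
          (by simpa [abs_of_nonneg (sub_nonneg.2 ht.2)] using hθ t L)
  linarith

theorem two_pi_le_mul_of_hasDerivAt_angle {θ ω : ℝ → ℝ} {κ L : ℝ} (hL : 0 < L)
    (hθ : ∀ t, HasDerivAt θ (ω t) t) (hω : ∀ t, |ω t| ≤ κ)
    (hwind : ∃ n : ℤ, θ L = θ 0 + n * (2 * π))
    (hint : ∀ c, ∫ t in 0..L, Real.cos (θ t - c) = 0) :
    2 * π ≤ κ * L := by
  have hlip : ∀ s t, |θ t - θ s| ≤ κ * |t - s| := fun s t => by
    simpa using convex_univ.norm_image_sub_le_of_norm_hasDerivWithin_le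
      (fun x _ => (hθ x).hasDerivWithinAt) (fun x _ => hω x) (mem_univ s) (mem_univ t)
  obtain ⟨n, hn⟩ := hwind
  rcases eq_or_ne n 0 with rfl | hn0
  · have hcont : Continuous θ := continuous_iff_continuousAt.2 fun t => (hθ t).continuousAt
    obtain ⟨s, hs, t, ht, hst⟩ :=
      exists_pi_le_sub_of_integral_cos_sub_eq_zero hL hcont.continuousOn hint
    have := two_mul_abs_sub_le_of_abs_sub_le_mul hlip (by simpa using hn) hs ht
    linarith [le_abs_self (θ s - θ t)]
  · have hn1 : (1 : ℝ) ≤ |(n : ℝ)| := by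
      rw [← Int.cast_abs]; exact_mod_cast Int.one_le_abs hn0
    calc 2 * π ≤ |(n : ℝ)| * (2 * π) := le_mul_of_one_le_left (by positivity) hn1
      _ = |θ L - θ 0| := by
        rw [hn, add_sub_cancel_left, abs_mul, abs_of_pos (by positivity : (0 : ℝ) < 2 * π)]
      _ ≤ κ * |L - 0| := hlip 0 L
      _ = κ * L := by rw [sub_zero, abs_of_pos hL]

theorem two_pi_le_mul_of_closed_unit_speed {κ L : ℝ} (hL : 0 < L) {γ u w : ℝ → ℂ}
    (hγ : ∀ t, HasDerivAt γ (u t) t) (hu : ∀ t, HasDerivAt u (w t) t) (hw : Continuous w)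
    (hunit : ∀ t, ‖u t‖ = 1) (hcurv : ∀ t, ‖w t‖ ≤ κ) (hγL : γ L = γ 0) (huL : u L = u 0) :
    2 * π ≤ κ * L := by
  obtain ⟨θ, hθ, hu_eq⟩ := exists_angle_lift hu hw hunit
  have hθcont : Continuous θ := continuous_iff_continuousAt.2 fun t => (hθ t).continuousAt
  refine two_pi_le_mul_of_hasDerivAt_angle hL hθ (fun t => ?_) ?_ (fun c => ?_)
  · calc |(conj (u t) * w t).im| ≤ ‖conj (u t) * w t‖ := abs_im_le_norm _
      _ = ‖w t‖ := by rw [norm_mul, Complex.norm_conj, hunit, one_mul]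
      _ ≤ κ := hcurv t
  · have hexp : exp (θ L * I) = exp (θ 0 * I) := by rw [← hu_eq, ← hu_eq, huL]
    obtain ⟨n, hn⟩ := exp_eq_exp_iff_exists_int.1 hexp
    exact ⟨n, by simpa using congrArg im hn⟩
  · -- `t ↦ Re (e^{-ic} γ t)` is a primitive of `cos (θ t - c)` taking the same value at `0` and `L`
    have hprim : ∀ t, HasDerivAt (fun t => (exp (-(c * I)) * γ t).re) (Real.cos (θ t - c)) t := by
      intro t
      refine (reCLM.hasFDerivAt.comp_hasDerivAt t
        ((hγ t).const_mul (exp (-(c * I))))).congr_deriv ?_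
      rw [hu_eq t, ← exp_add, reCLM_apply,
        show -(c * I) + θ t * I = ((θ t - c : ℝ) : ℂ) * I by push_cast; ring, exp_ofReal_mul_I_re]
    have hcos : Continuous fun t => Real.cos (θ t - c) := by fun_prop
    rw [integral_eq_sub_of_hasDerivAt (fun t _ => hprim t) (hcos.intervalIntegrable 0 L), hγL,
      sub_self]

theorem loop_length_lower_bound_general (κ L : ℝ) (hκ : 0 < κ) (hL : 0 < L)
    (σ v a : ℝ → EuclideanSpace ℝ (Fin 2))
    (hper : Function.Periodic σ L)
    (hderiv : ∀ t, HasDerivAt σ (v t) t)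
    (hderiv2 : ∀ t, HasDerivAt v (a t) t)
    (hacont : Continuous a)
    (hunit : ∀ t, ‖v t‖ = 1)
    (hcurv : ∀ t, ‖a t‖ ≤ κ) :
    2 * Real.pi / κ ≤ L := by
  let e := Complex.orthonormalBasisOneI.repr.symm
  have he {f f' : ℝ → EuclideanSpace ℝ (Fin 2)} (hf : ∀ t, HasDerivAt f (f' t) t) (t : ℝ) :
      HasDerivAt (e ∘ f) (e (f' t)) t :=
    e.hasFDerivAt.comp_hasDerivAt t (hf t)
  rw [div_le_iff₀ hκ, mul_comm L]
  exact two_pi_le_mul_of_closed_unit_speed hL (he hderiv) (he hderiv2)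
    (e.continuous.comp hacont) (by simpa using hunit) (by simpa using hcurv)
    (congrArg e (by simpa using hper 0))
    (congrArg e (by simpa using hper.periodic_of_hasDerivAt hderiv 0))

/-- A simple closed unit-speed `C²` plane curve of length `L` with `‖σ''‖ ≤ κ` satisfies
`L ≥ 2π/κ`. -/
theorem loop_length_lower_bound (κ L : ℝ) (hκ : 0 < κ) (hL : 0 < L)
    (σ v a : ℝ → EuclideanSpace ℝ (Fin 2))
    (hper : Function.Periodic σ L) (hvper : Function.Periodic v L)
    (hderiv : ∀ t, HasDerivAt σ (v t) t)
    (hderiv2 : ∀ t, HasDerivAt v (a t) t)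
    (hacont : Continuous a)
    (hunit : ∀ t, ‖v t‖ = 1)
    (hcurv : ∀ t, ‖a t‖ ≤ κ)
    (hinj : Set.InjOn σ (Set.Ico 0 L)) :
    2 * Real.pi / κ ≤ L :=
  loop_length_lower_bound_general κ L hκ hL σ v a hper hderiv hderiv2 hacont hunit hcurv
end
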